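/- Validity in CN4K is decidable: there is an algorithm deciding, for any formula φ of the modal language with strong negation, whether φ is valid in all CN4K models. -/

import Mathlib

/-- Formulas of the modal language with strong negation. -/
inductive MFm : Type where
  | pv : ℕ → MFm
  | neg : MFm → MFm
  | conj : MFm → MFm → MFm
  | disj : MFm → MFm → MFm
  | imp : MFm → MFm → MFm
  | box : MFm → MFm
  | dia : MFm → MFm

/-- `φ ↔ χ` abbreviates `(φ→χ) ∧ (χ→φ)`. -/
def MFm.biimp (φ χ : MFm) : MFm := .conj (.imp φ χ) (.imp χ φ)

/-- A CN4K frame: a preordered set with four accessibility relations. -/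
structure CN4KFrame where
  W : Type
  le : W → W → Prop
  le_refl : ∀ w, le w w
  le_trans : ∀ u v w, le u v → le v w → le u w
  Rpb : W → W → Prop
  Rnb : W → W → Prop
  Rpd : W → W → Prop
  Rnd : W → W → Prop

/-- A CN4K model over a frame: two persistent valuations. -/
structure CN4KModel (F : CN4KFrame) where
  vp : ℕ → F.W → Prop
  vn : ℕ → F.W → Prop
  vp_mono : ∀ n w w', F.le w w' → vp n w → vp n w'
  vn_mono : ∀ n w w', F.le w w' → vn n w → vn n w'

/-- Support of truth (`b = true`) and falsity (`b = false`). -/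
def CN4KModel.sup {F : CN4KFrame} (M : CN4KModel F) : MFm → Bool → F.W → Prop
  | .pv n, true, w => M.vp n w
  | .pv n, false, w => M.vn n w
  | .neg φ, b, w => M.sup φ (!b) w
  | .conj φ χ, true, w => M.sup φ true w ∧ M.sup χ true w
  | .conj φ χ, false, w => M.sup φ false w ∨ M.sup χ false w
  | .disj φ χ, true, w => M.sup φ true w ∨ M.sup χ true w
  | .disj φ χ, false, w => M.sup φ false w ∧ M.sup χ false w
  | .imp φ χ, true, w => ∀ w', F.le w w' → M.sup φ true w' → M.sup χ true w'
  | .imp φ χ, false, w => M.sup φ true w ∧ M.sup χ false w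
  | .box φ, true, w => ∀ w', F.le w w' → ∀ u, F.Rpb w' u → M.sup φ true u
  | .box φ, false, w => ∀ w', F.le w w' → ∃ u, F.Rnb w' u ∧ M.sup φ false u
  | .dia φ, true, w => ∀ w', F.le w w' → ∃ u, F.Rpd w' u ∧ M.sup φ true u
  | .dia φ, false, w => ∀ w', F.le w w' → ∀ u, F.Rnd w' u → M.sup φ false u

/-- Validity in CN4K: positive support at every state of every model. -/
def CN4KValid (φ : MFm) : Prop :=
  ∀ (F : CN4KFrame) (M : CN4KModel F) (w : F.W), M.sup φ true w

/-- Semantic entailment in CN4K. -/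
def CN4KEntails (Γ : Set MFm) (χ : MFm) : Prop :=
  ∀ (F : CN4KFrame) (M : CN4KModel F) (w : F.W),
    (∀ φ ∈ Γ, M.sup φ true w) → M.sup χ true w

/-- A numeric encoding of formulas. -/
def MFm.encode : MFm → ℕ
  | .pv n => Nat.pair 0 n
  | .neg φ => Nat.pair 1 φ.encode
  | .conj φ χ => Nat.pair 2 (Nat.pair φ.encode χ.encode)
  | .disj φ χ => Nat.pair 3 (Nat.pair φ.encode χ.encode)
  | .imp φ χ => Nat.pair 4 (Nat.pair φ.encode χ.encode)
  | .box φ => Nat.pair 5 φ.encode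
  | .dia φ => Nat.pair 6 φ.encode

/- ============ basics ============ -/

lemma sup_mono {F : CN4KFrame} (M : CN4KModel F) :
    ∀ (φ : MFm) (b : Bool) (w w' : F.W), F.le w w' → M.sup φ b w → M.sup φ b w' := by
  intro φ
  induction φ with
  | pv n =>
      intro b w w' h hs
      cases b
      · exact M.vn_mono n w w' h hs
      · exact M.vp_mono n w w' h hs
  | neg φ ih => intro b w w' h hs; exact ih (!b) w w' h hs
  | conj φ χ ihφ ihχ =>
      intro b w w' h hs; cases b
      · exact hs.imp (ihφ false w w' h) (ihχ false w w' h)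
      · exact ⟨ihφ true w w' h hs.1, ihχ true w w' h hs.2⟩
  | disj φ χ ihφ ihχ =>
      intro b w w' h hs; cases b
      · exact ⟨ihφ false w w' h hs.1, ihχ false w w' h hs.2⟩
      · exact hs.imp (ihφ true w w' h) (ihχ true w w' h)
  | imp φ χ ihφ ihχ =>
      intro b w w' h hs; cases b
      · exact ⟨ihφ true w w' h hs.1, ihχ false w w' h hs.2⟩
      · exact fun u hu => hs u (F.le_trans _ _ _ h hu)
  | box φ ih =>
      intro b w w' h hs; cases b
      · exact fun u hu => hs u (F.le_trans _ _ _ h hu)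
      · exact fun u hu => hs u (F.le_trans _ _ _ h hu)
  | dia φ ih =>
      intro b w w' h hs; cases b
      · exact fun u hu => hs u (F.le_trans _ _ _ h hu)
      · exact fun u hu => hs u (F.le_trans _ _ _ h hu)

def MFm.subs : MFm → List MFm
  | .pv n => [.pv n]
  | .neg φ => .neg φ :: φ.subs
  | .conj φ χ => .conj φ χ :: (φ.subs ++ χ.subs)
  | .disj φ χ => .disj φ χ :: (φ.subs ++ χ.subs)
  | .imp φ χ => .imp φ χ :: (φ.subs ++ χ.subs)
  | .box φ => .box φ :: φ.subs
  | .dia φ => .dia φ :: φ.subs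

lemma MFm.mem_subs_self (φ : MFm) : φ ∈ φ.subs := by
  cases φ <;> simp [MFm.subs]

lemma MFm.subs_trans : ∀ χ ψ : MFm, ψ ∈ χ.subs → ψ.subs ⊆ χ.subs := by
  intro χ
  induction χ with
  | pv n => intro ψ h; simp [MFm.subs] at h; subst h; simp [MFm.subs]
  | neg φ ih =>
      intro ψ h; simp [MFm.subs] at h
      rcases h with h | h
      · subst h; exact fun _ h => h
      · exact fun x hx => by simp [MFm.subs]; right; exact ih ψ h hx
  | conj φ χ ihφ ihχ =>
      intro ψ h; simp [MFm.subs] at h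
      rcases h with h | h | h
      · subst h; exact fun _ h => h
      · exact fun x hx => by simp [MFm.subs]; right; left; exact ihφ ψ h hx
      · exact fun x hx => by simp [MFm.subs]; right; right; exact ihχ ψ h hx
  | disj φ χ ihφ ihχ =>
      intro ψ h; simp [MFm.subs] at h
      rcases h with h | h | h
      · subst h; exact fun _ h => h
      · exact fun x hx => by simp [MFm.subs]; right; left; exact ihφ ψ h hx
      · exact fun x hx => by simp [MFm.subs]; right; right; exact ihχ ψ h hx
  | imp φ χ ihφ ihχ =>
      intro ψ h; simp [MFm.subs] at h
      rcases h with h | h | h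
      · subst h; exact fun _ h => h
      · exact fun x hx => by simp [MFm.subs]; right; left; exact ihφ ψ h hx
      · exact fun x hx => by simp [MFm.subs]; right; right; exact ihχ ψ h hx
  | box φ ih =>
      intro ψ h; simp [MFm.subs] at h
      rcases h with h | h
      · subst h; exact fun _ h => h
      · exact fun x hx => by simp [MFm.subs]; right; exact ih ψ h hx
  | dia φ ih =>
      intro ψ h; simp [MFm.subs] at h
      rcases h with h | h
      · subst h; exact fun _ h => h
      · exact fun x hx => by simp [MFm.subs]; right; exact ih ψ h hx

lemma unpair_right_lt {c : ℕ} (h : 1 ≤ c.unpair.1) : c.unpair.2 < c := by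
  have h2 := Nat.add_le_pair c.unpair.1 c.unpair.2
  rw [Nat.pair_unpair] at h2
  omega

lemma MFm.length_subs_le (φ : MFm) : φ.subs.length ≤ φ.encode + 1 := by
  induction φ with
  | pv n => simp [MFm.subs]
  | neg φ ih =>
      simp only [MFm.subs, List.length_cons, MFm.encode]
      have := Nat.add_le_pair 1 φ.encode; omega
  | conj φ χ ihφ ihχ =>
      simp only [MFm.subs, List.length_cons, List.length_append, MFm.encode]
      have h1 := Nat.add_le_pair 2 (Nat.pair φ.encode χ.encode)
      have h2 := Nat.add_le_pair φ.encode χ.encode; omega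
  | disj φ χ ihφ ihχ =>
      simp only [MFm.subs, List.length_cons, List.length_append, MFm.encode]
      have h1 := Nat.add_le_pair 3 (Nat.pair φ.encode χ.encode)
      have h2 := Nat.add_le_pair φ.encode χ.encode; omega
  | imp φ χ ihφ ihχ =>
      simp only [MFm.subs, List.length_cons, List.length_append, MFm.encode]
      have h1 := Nat.add_le_pair 4 (Nat.pair φ.encode χ.encode)
      have h2 := Nat.add_le_pair φ.encode χ.encode; omega
  | box φ ih =>
      simp only [MFm.subs, List.length_cons, MFm.encode]
      have := Nat.add_le_pair 5 φ.encode; omega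
  | dia φ ih =>
      simp only [MFm.subs, List.length_cons, MFm.encode]
      have := Nat.add_le_pair 6 φ.encode; omega

/-- total decoding of naturals into formulas -/
def decodeF (c : ℕ) : MFm :=
  if h1 : c.unpair.1 = 1 then .neg (decodeF c.unpair.2)
  else if h2 : c.unpair.1 = 2 then
    .conj (decodeF c.unpair.2.unpair.1) (decodeF c.unpair.2.unpair.2)
  else if h3 : c.unpair.1 = 3 then
    .disj (decodeF c.unpair.2.unpair.1) (decodeF c.unpair.2.unpair.2)
  else if h4 : c.unpair.1 = 4 then
    .imp (decodeF c.unpair.2.unpair.1) (decodeF c.unpair.2.unpair.2)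
  else if h5 : c.unpair.1 = 5 then .box (decodeF c.unpair.2)
  else if h6 : c.unpair.1 = 6 then .dia (decodeF c.unpair.2)
  else .pv c.unpair.2
  decreasing_by
    all_goals
      have hx : c.unpair.2 < c := unpair_right_lt (by omega)
    · exact hx
    · exact lt_of_le_of_lt (Nat.unpair_left_le _) hx
    · exact lt_of_le_of_lt (Nat.unpair_right_le _) hx
    · exact lt_of_le_of_lt (Nat.unpair_left_le _) hx
    · exact lt_of_le_of_lt (Nat.unpair_right_le _) hx
    · exact lt_of_le_of_lt (Nat.unpair_left_le _) hx
    · exact lt_of_le_of_lt (Nat.unpair_right_le _) hx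
    · exact hx
    · exact hx

lemma decodeF_encode (φ : MFm) : decodeF φ.encode = φ := by
  induction φ with
  | pv n => rw [decodeF]; simp [MFm.encode]
  | neg φ ih => rw [decodeF]; simp [MFm.encode, ih]
  | conj φ χ ihφ ihχ => rw [decodeF]; simp [MFm.encode, ihφ, ihχ]
  | disj φ χ ihφ ihχ => rw [decodeF]; simp [MFm.encode, ihφ, ihχ]
  | imp φ χ ihφ ihχ => rw [decodeF]; simp [MFm.encode, ihφ, ihχ]
  | box φ ih => rw [decodeF]; simp [MFm.encode, ih]
  | dia φ ih => rw [decodeF]; simp [MFm.encode, ih]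

/- ============ canonical finite model ============ -/

def TripleT := (MFm → Bool → Prop) × (MFm → Prop) × (MFm → Prop)

def tripleOf (φ0 : MFm) (F : CN4KFrame) (M : CN4KModel F) (w : F.W) : TripleT :=
  ⟨fun ψ b => ψ ∈ φ0.subs ∧ M.sup ψ b w,
   fun ψ => ψ ∈ φ0.subs ∧ ∀ u, F.Rnb w u → ¬ M.sup ψ false u,
   fun ψ => ψ ∈ φ0.subs ∧ ∀ u, F.Rpd w u → ¬ M.sup ψ true u⟩

def Realizable (φ0 : MFm) (x : TripleT) : Prop :=
  ∃ (F : CN4KFrame) (M : CN4KModel F) (w : F.W), tripleOf φ0 F M w = x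

def cF (φ0 : MFm) : CN4KFrame where
  W := {x : TripleT // Realizable φ0 x}
  le x y := ∀ ψ b, x.1.1 ψ b → y.1.1 ψ b
  le_refl _ := fun _ _ h => h
  le_trans _ _ _ h1 h2 := fun ψ b h => h2 ψ b (h1 ψ b h)
  Rpb x y := ∀ ψ, x.1.1 (.box ψ) true → y.1.1 ψ true
  Rnb x y := ∃ (F : CN4KFrame) (M : CN4KModel F) (w u : F.W),
    F.Rnb w u ∧ tripleOf φ0 F M w = x.1 ∧ tripleOf φ0 F M u = y.1
  Rpd x y := ∃ (F : CN4KFrame) (M : CN4KModel F) (w u : F.W),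
    F.Rpd w u ∧ tripleOf φ0 F M w = x.1 ∧ tripleOf φ0 F M u = y.1
  Rnd x y := ∀ ψ, x.1.1 (.dia ψ) false → y.1.1 ψ false

def cM (φ0 : MFm) : CN4KModel (cF φ0) where
  vp n x := x.1.1 (.pv n) true
  vn n x := x.1.1 (.pv n) false
  vp_mono _ _ _ h := h _ _
  vn_mono _ _ _ h := h _ _

/-- the canonical world corresponding to a world of an arbitrary model -/
def cw (φ0 : MFm) (F : CN4KFrame) (M : CN4KModel F) (w : F.W) : (cF φ0).W :=
  ⟨tripleOf φ0 F M w, ⟨F, M, w, rfl⟩⟩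

lemma cw_le (φ0 : MFm) {F : CN4KFrame} (M : CN4KModel F) {w w' : F.W} (h : F.le w w')
    {x : (cF φ0).W} (hx : x.1 = tripleOf φ0 F M w) :
    (cF φ0).le x (cw φ0 F M w') := by
  intro ψ b hb
  rw [hx] at hb
  exact ⟨hb.1, sup_mono M ψ b w w' h hb.2⟩

lemma truth_lemma (φ0 : MFm) :
    ∀ (ψ : MFm), ψ ∈ φ0.subs → ∀ (b : Bool) (F : CN4KFrame) (M : CN4KModel F) (w : F.W)
      (x : (cF φ0).W), x.1 = tripleOf φ0 F M w →
      ((cM φ0).sup ψ b x ↔ M.sup ψ b w) := by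
  intro ψ
  induction ψ with
  | pv n =>
      intro hmem b F M w x hx
      cases b <;>
        simp only [CN4KModel.sup, cM, hx, tripleOf] <;>
        exact ⟨fun h => h.2, fun h => ⟨hmem, h⟩⟩
  | neg φ ih =>
      intro hmem b F M w x hx
      have hφ : φ ∈ φ0.subs :=
        MFm.subs_trans φ0 _ hmem (by simp [MFm.subs, MFm.mem_subs_self])
      simpa only [CN4KModel.sup] using ih hφ (!b) F M w x hx
  | conj φ χ ihφ ihχ =>
      intro hmem b F M w x hx
      have hφ : φ ∈ φ0.subs :=
        MFm.subs_trans φ0 _ hmem (by simp [MFm.subs, MFm.mem_subs_self])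
      have hχ : χ ∈ φ0.subs :=
        MFm.subs_trans φ0 _ hmem (by simp [MFm.subs, MFm.mem_subs_self])
      cases b <;> simp only [CN4KModel.sup] <;>
        rw [ihφ hφ _ F M w x hx, ihχ hχ _ F M w x hx]
  | disj φ χ ihφ ihχ =>
      intro hmem b F M w x hx
      have hφ : φ ∈ φ0.subs :=
        MFm.subs_trans φ0 _ hmem (by simp [MFm.subs, MFm.mem_subs_self])
      have hχ : χ ∈ φ0.subs :=
        MFm.subs_trans φ0 _ hmem (by simp [MFm.subs, MFm.mem_subs_self])
      cases b <;> simp only [CN4KModel.sup] <;>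
        rw [ihφ hφ _ F M w x hx, ihχ hχ _ F M w x hx]
  | imp φ χ ihφ ihχ =>
      intro hmem b F M w x hx
      have hφ : φ ∈ φ0.subs :=
        MFm.subs_trans φ0 _ hmem (by simp [MFm.subs, MFm.mem_subs_self])
      have hχ : χ ∈ φ0.subs :=
        MFm.subs_trans φ0 _ hmem (by simp [MFm.subs, MFm.mem_subs_self])
      cases b
      · simp only [CN4KModel.sup]
        rw [ihφ hφ true F M w x hx, ihχ hχ false F M w x hx]
      · simp only [CN4KModel.sup]
        constructor
        · intro hs w' hw' hφw'
          have hle := cw_le φ0 M hw' hx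
          have h1 := hs (cw φ0 F M w') hle
            ((ihφ hφ true F M w' (cw φ0 F M w') rfl).mpr hφw')
          exact (ihχ hχ true F M w' (cw φ0 F M w') rfl).mp h1
        · intro hs y hle hφy
          obtain ⟨F', M', u, hu⟩ := y.2
          have hφu : M'.sup φ true u := (ihφ hφ true F' M' u y hu.symm).mp hφy
          have hyt : y.1.1 (.imp φ χ) true := hle _ _ (by rw [hx]; exact ⟨hmem, hs⟩)
          rw [← hu] at hyt
          have hχu := hyt.2 u (F'.le_refl u) hφu
          exact (ihχ hχ true F' M' u y hu.symm).mpr hχu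
  | box φ ih =>
      intro hmem b F M w x hx
      have hφ : φ ∈ φ0.subs :=
        MFm.subs_trans φ0 _ hmem (by simp [MFm.subs, MFm.mem_subs_self])
      cases b
      · -- box false
        simp only [CN4KModel.sup]
        constructor
        · -- canonical → original, uses the G component
          intro hs
          by_contra hc
          push_neg at hc
          obtain ⟨w', hw', hnc⟩ := hc
          obtain ⟨z, hrz, hz⟩ := hs (cw φ0 F M w') (cw_le φ0 M hw' hx)
          obtain ⟨F₂, M₂, v, u₂, hvu, hv, hu₂⟩ := hrz
          have hGv : (tripleOf φ0 F₂ M₂ v).2.1 φ = (tripleOf φ0 F M w').2.1 φ := by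
            rw [hv]; rfl
          have hGw' : (tripleOf φ0 F M w').2.1 φ := ⟨hφ, fun u hru hsu => hnc u hru hsu⟩
          have hGv' : (tripleOf φ0 F₂ M₂ v).2.1 φ := by rw [hGv]; exact hGw'
          have : ¬ M₂.sup φ false u₂ := hGv'.2 u₂ hvu
          exact this ((ih hφ false F₂ M₂ u₂ z hu₂.symm).mp hz)
        · intro hs y hle
          obtain ⟨F', M', u', hu'⟩ := y.2
          have hyt : y.1.1 (.box φ) false := hle _ _ (by rw [hx]; exact ⟨hmem, hs⟩)
          rw [← hu'] at hyt
          obtain ⟨v, hrv, hsv⟩ := hyt.2 u' (F'.le_refl u')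
          refine ⟨cw φ0 F' M' v, ⟨F', M', u', v, hrv, hu', rfl⟩, ?_⟩
          exact (ih hφ false F' M' v (cw φ0 F' M' v) rfl).mpr hsv
      · -- box true
        simp only [CN4KModel.sup]
        constructor
        · intro hs w' hw' u hru
          have hrpb : (cF φ0).Rpb (cw φ0 F M w') (cw φ0 F M u) := by
            intro ψ hψ
            exact ⟨MFm.subs_trans φ0 _ hψ.1 (by simp [MFm.subs, MFm.mem_subs_self]),
              hψ.2 w' (F.le_refl w') u hru⟩
          have h1 := hs (cw φ0 F M w') (cw_le φ0 M hw' hx) (cw φ0 F M u) hrpb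
          exact (ih hφ true F M u (cw φ0 F M u) rfl).mp h1
        · intro hs y hle z hrz
          obtain ⟨F', M', u, hu⟩ := z.2
          have hyt : y.1.1 (.box φ) true := hle _ _ (by rw [hx]; exact ⟨hmem, hs⟩)
          have hzt : z.1.1 φ true := hrz φ hyt
          rw [← hu] at hzt
          exact (ih hφ true F' M' u z hu.symm).mpr hzt.2
  | dia φ ih =>
      intro hmem b F M w x hx
      have hφ : φ ∈ φ0.subs :=
        MFm.subs_trans φ0 _ hmem (by simp [MFm.subs, MFm.mem_subs_self])
      cases b
      · -- dia false
        simp only [CN4KModel.sup]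
        constructor
        · intro hs w' hw' u hru
          have hrnd : (cF φ0).Rnd (cw φ0 F M w') (cw φ0 F M u) := by
            intro ψ hψ
            exact ⟨MFm.subs_trans φ0 _ hψ.1 (by simp [MFm.subs, MFm.mem_subs_self]),
              hψ.2 w' (F.le_refl w') u hru⟩
          have h1 := hs (cw φ0 F M w') (cw_le φ0 M hw' hx) (cw φ0 F M u) hrnd
          exact (ih hφ false F M u (cw φ0 F M u) rfl).mp h1
        · intro hs y hle z hrz
          obtain ⟨F', M', u, hu⟩ := z.2
          have hyt : y.1.1 (.dia φ) false := hle _ _ (by rw [hx]; exact ⟨hmem, hs⟩)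
          have hzt : z.1.1 φ false := hrz φ hyt
          rw [← hu] at hzt
          exact (ih hφ false F' M' u z hu.symm).mpr hzt.2
      · -- dia true
        simp only [CN4KModel.sup]
        constructor
        · intro hs
          by_contra hc
          push_neg at hc
          obtain ⟨w', hw', hnc⟩ := hc
          obtain ⟨z, hrz, hz⟩ := hs (cw φ0 F M w') (cw_le φ0 M hw' hx)
          obtain ⟨F₂, M₂, v, u₂, hvu, hv, hu₂⟩ := hrz
          have hHv : (tripleOf φ0 F₂ M₂ v).2.2 φ = (tripleOf φ0 F M w').2.2 φ := by
            rw [hv]; rfl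
          have hHw' : (tripleOf φ0 F M w').2.2 φ := ⟨hφ, fun u hru hsu => hnc u hru hsu⟩
          have hHv' : (tripleOf φ0 F₂ M₂ v).2.2 φ := by rw [hHv]; exact hHw'
          have : ¬ M₂.sup φ true u₂ := hHv'.2 u₂ hvu
          exact this ((ih hφ true F₂ M₂ u₂ z hu₂.symm).mp hz)
        · intro hs y hle
          obtain ⟨F', M', u', hu'⟩ := y.2
          have hyt : y.1.1 (.dia φ) true := hle _ _ (by rw [hx]; exact ⟨hmem, hs⟩)
          rw [← hu'] at hyt
          obtain ⟨v, hrv, hsv⟩ := hyt.2 u' (F'.le_refl u')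
          refine ⟨cw φ0 F' M' v, ⟨F', M', u', v, hrv, hu', rfl⟩, ?_⟩
          exact (ih hφ true F' M' v (cw φ0 F' M' v) rfl).mpr hsv

/- ============ finiteness and transport ============ -/

open Classical in
noncomputable def Jc (φ0 : MFm) (x : (cF φ0).W) :
    Fin φ0.subs.length → Bool × Bool × Bool × Bool := fun i =>
  (decide (x.1.1 (φ0.subs.get i) true), decide (x.1.1 (φ0.subs.get i) false),
   decide (x.1.2.1 (φ0.subs.get i)), decide (x.1.2.2 (φ0.subs.get i)))

lemma Jc_inj (φ0 : MFm) : Function.Injective (Jc φ0) := by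
  classical
  intro x y hxy
  obtain ⟨F, M, w, hw⟩ := x.2
  obtain ⟨F', M', w', hw'⟩ := y.2
  have key : ∀ ψ : MFm, ψ ∈ φ0.subs →
      (x.1.1 ψ true ↔ y.1.1 ψ true) ∧ (x.1.1 ψ false ↔ y.1.1 ψ false) ∧
      (x.1.2.1 ψ ↔ y.1.2.1 ψ) ∧ (x.1.2.2 ψ ↔ y.1.2.2 ψ) := by
    intro ψ hψ
    obtain ⟨i, hi⟩ := List.get_of_mem hψ
    have h := congrFun hxy i
    simp only [Jc, hi, Prod.mk.injEq] at h
    exact ⟨decide_eq_decide.mp h.1,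
      decide_eq_decide.mp h.2.1, decide_eq_decide.mp h.2.2.1, decide_eq_decide.mp h.2.2.2⟩
  apply Subtype.ext
  have h1 : x.1.1 = y.1.1 := by
    funext ψ b
    by_cases hψ : ψ ∈ φ0.subs
    · cases b
      · exact propext (key ψ hψ).2.1
      · exact propext (key ψ hψ).1
    · rw [← hw, ← hw']
      simp only [tripleOf]
      exact propext ⟨fun h => absurd h.1 hψ, fun h => absurd h.1 hψ⟩
  have h2 : x.1.2.1 = y.1.2.1 := by
    funext ψ
    by_cases hψ : ψ ∈ φ0.subs
    · exact propext (key ψ hψ).2.2.1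
    · rw [← hw, ← hw']
      simp only [tripleOf]
      exact propext ⟨fun h => absurd h.1 hψ, fun h => absurd h.1 hψ⟩
  have h3 : x.1.2.2 = y.1.2.2 := by
    funext ψ
    by_cases hψ : ψ ∈ φ0.subs
    · exact propext (key ψ hψ).2.2.2
    · rw [← hw, ← hw']
      simp only [tripleOf]
      exact propext ⟨fun h => absurd h.1 hψ, fun h => absurd h.1 hψ⟩
  exact Prod.ext h1 (Prod.ext h2 h3)

lemma finite_cW (φ0 : MFm) : Finite ((cF φ0).W) :=
  Finite.of_injective (Jc φ0) (Jc_inj φ0)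

lemma card_cW (φ0 : MFm) : Nat.card ((cF φ0).W) ≤ 16 ^ (φ0.encode + 1) := by
  have hfin := finite_cW φ0
  have h1 : Nat.card ((cF φ0).W) ≤
      Nat.card (Fin φ0.subs.length → Bool × Bool × Bool × Bool) :=
    Nat.card_le_card_of_injective (Jc φ0) (Jc_inj φ0)
  have h2 : Nat.card (Fin φ0.subs.length → Bool × Bool × Bool × Bool) =
      16 ^ φ0.subs.length := by
    rw [Nat.card_fun]
    congr 1
    · simp [Nat.card_prod, Nat.card_eq_fintype_card]
    · simp [Nat.card_eq_fintype_card]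
  have h3 : (16:ℕ) ^ φ0.subs.length ≤ 16 ^ (φ0.encode + 1) :=
    Nat.pow_le_pow_right (by norm_num) (MFm.length_subs_le φ0)
  omega

/- transport a model along an equivalence -/

def CN4KFrame.fmap (F : CN4KFrame) {β : Type} (e : F.W ≃ β) : CN4KFrame where
  W := β
  le a b := F.le (e.symm a) (e.symm b)
  le_refl a := F.le_refl _
  le_trans a b c h1 h2 := F.le_trans _ _ _ h1 h2
  Rpb a b := F.Rpb (e.symm a) (e.symm b)
  Rnb a b := F.Rnb (e.symm a) (e.symm b)
  Rpd a b := F.Rpd (e.symm a) (e.symm b)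
  Rnd a b := F.Rnd (e.symm a) (e.symm b)

def CN4KModel.fmap {F : CN4KFrame} (M : CN4KModel F) {β : Type} (e : F.W ≃ β) :
    CN4KModel (F.fmap e) where
  vp n a := M.vp n (e.symm a)
  vn n a := M.vn n (e.symm a)
  vp_mono n a b h hv := M.vp_mono n _ _ h hv
  vn_mono n a b h hv := M.vn_mono n _ _ h hv

lemma sup_fmap {F : CN4KFrame} (M : CN4KModel F) {β : Type} (e : F.W ≃ β) :
    ∀ (ψ : MFm) (b : Bool) (a : β), (M.fmap e).sup ψ b a ↔ M.sup ψ b (e.symm a) := by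
  intro ψ
  induction ψ with
  | pv n => intro b a; cases b <;> rfl
  | neg φ ih => intro b a; simpa only [CN4KModel.sup] using ih (!b) a
  | conj φ χ ihφ ihχ =>
      intro b a; cases b <;> simp only [CN4KModel.sup] <;> rw [ihφ, ihχ]
  | disj φ χ ihφ ihχ =>
      intro b a; cases b <;> simp only [CN4KModel.sup] <;> rw [ihφ, ihχ]
  | imp φ χ ihφ ihχ =>
      intro b a; cases b
      · simp only [CN4KModel.sup]; rw [ihφ, ihχ]
      · simp only [CN4KModel.sup]
        constructor
        · intro hs w' hw' hφ
          have := hs (e w') (by simpa [CN4KFrame.fmap] using hw')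
            (by rw [ihφ]; simpa using hφ)
          rw [ihχ] at this; simpa using this
        · intro hs a' ha' hφ
          exact (ihχ true a').mpr (hs (e.symm a') ha' ((ihφ true a').mp hφ))
  | box φ ih =>
      intro b a; cases b
      · simp only [CN4KModel.sup]
        constructor
        · intro hs w' hw'
          obtain ⟨u, hu1, hu2⟩ := hs (e w') (by simpa [CN4KFrame.fmap] using hw')
          exact ⟨e.symm u, by simpa [CN4KFrame.fmap] using hu1, (ih false u).mp hu2⟩
        · intro hs a' ha'
          obtain ⟨u, hu1, hu2⟩ := hs (e.symm a') ha'
          exact ⟨e u, by simpa [CN4KFrame.fmap] using hu1, (ih false (e u)).mpr (by simpa using hu2)⟩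
      · simp only [CN4KModel.sup]
        constructor
        · intro hs w' hw' u hru
          have := hs (e w') (by simpa [CN4KFrame.fmap] using hw') (e u)
            (by simpa [CN4KFrame.fmap] using hru)
          rw [ih] at this; simpa using this
        · intro hs a' ha' u hru
          exact (ih true u).mpr (hs (e.symm a') ha' (e.symm u) hru)
  | dia φ ih =>
      intro b a; cases b
      · simp only [CN4KModel.sup]
        constructor
        · intro hs w' hw' u hru
          have := hs (e w') (by simpa [CN4KFrame.fmap] using hw') (e u)
            (by simpa [CN4KFrame.fmap] using hru)
          rw [ih] at this; simpa using this
        · intro hs a' ha' u hru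
          exact (ih false u).mpr (hs (e.symm a') ha' (e.symm u) hru)
      · simp only [CN4KModel.sup]
        constructor
        · intro hs w' hw'
          obtain ⟨u, hu1, hu2⟩ := hs (e w') (by simpa [CN4KFrame.fmap] using hw')
          exact ⟨e.symm u, by simpa [CN4KFrame.fmap] using hu1, (ih true u).mp hu2⟩
        · intro hs a' ha'
          obtain ⟨u, hu1, hu2⟩ := hs (e.symm a') ha'
          exact ⟨e u, by simpa [CN4KFrame.fmap] using hu1, (ih true (e u)).mpr (by simpa using hu2)⟩

/-- the finite model property -/
lemma fmp (φ0 : MFm) (h : ¬ CN4KValid φ0) :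
    ∃ (k : ℕ), k ≤ 16 ^ (φ0.encode + 1) ∧
      ∃ (F : CN4KFrame) (M : CN4KModel F) (_ : F.W = Fin k) (w : F.W),
        ¬ M.sup φ0 true w := by
  simp only [CN4KValid, not_forall] at h
  obtain ⟨F, M, w, hw⟩ := h
  have hfin := finite_cW φ0
  refine ⟨Nat.card ((cF φ0).W), card_cW φ0, ?_⟩
  let e := Finite.equivFin ((cF φ0).W)
  refine ⟨(cF φ0).fmap e, (cM φ0).fmap e, rfl, e (cw φ0 F M w), ?_⟩
  rw [sup_fmap]
  simp only [Equiv.symm_apply_apply]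
  rw [truth_lemma φ0 φ0 (MFm.mem_subs_self φ0) true F M w (cw φ0 F M w) rfl]
  exact hw

/- ============ the arithmetic checker ============ -/

def bitf (z i : ℕ) : Bool := decide (z / 2 ^ i % 2 = 1)

def bAll : ℕ → (ℕ → Bool) → Bool
  | 0, _ => true
  | n + 1, p => bAll n p && p n

def bAny : ℕ → (ℕ → Bool) → Bool
  | 0, _ => false
  | n + 1, p => bAny n p || p n

lemma bAll_eq_true {n : ℕ} {p : ℕ → Bool} : bAll n p = true ↔ ∀ i, i < n → p i = true := by
  induction n with
  | zero => simp [bAll]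
  | succ n ih =>
      simp only [bAll, Bool.and_eq_true, ih]
      constructor
      · rintro ⟨h1, h2⟩ i hi
        rcases Nat.lt_succ_iff_lt_or_eq.mp hi with h | h
        · exact h1 i h
        · subst h; exact h2
      · intro h
        exact ⟨fun i hi => h i (Nat.lt_succ_of_lt hi), h n (Nat.lt_succ_self n)⟩

lemma bAny_eq_true {n : ℕ} {p : ℕ → Bool} : bAny n p = true ↔ ∃ i, i < n ∧ p i = true := by
  induction n with
  | zero => simp [bAny]
  | succ n ih =>
      simp only [bAny, Bool.or_eq_true, ih]
      constructor
      · rintro (⟨i, hi, hp⟩ | h)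
        · exact ⟨i, Nat.lt_succ_of_lt hi, hp⟩
        · exact ⟨n, Nat.lt_succ_self n, h⟩
      · rintro ⟨i, hi, hp⟩
        rcases Nat.lt_succ_iff_lt_or_eq.mp hi with h | h
        · exact Or.inl ⟨i, h, hp⟩
        · subst h; exact Or.inr hp

def leB (k z i j : ℕ) : Bool := bitf z (i * k + j)
def rpbB (k z i j : ℕ) : Bool := bitf z (k * k + (i * k + j))
def rnbB (k z i j : ℕ) : Bool := bitf z (2 * (k * k) + (i * k + j))
def rpdB (k z i j : ℕ) : Bool := bitf z (3 * (k * k) + (i * k + j))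
def rndB (k z i j : ℕ) : Bool := bitf z (4 * (k * k) + (i * k + j))
def vpB (e k z n i : ℕ) : Bool := bitf z (5 * (k * k) + (n * k + i))
def vnB (e k z n i : ℕ) : Bool := bitf z (5 * (k * k) + (e + 1) * k + (n * k + i))
def tabB (e k z c b w : ℕ) : Bool :=
  bitf z (5 * (k * k) + 2 * ((e + 1) * k) + ((2 * c + b) * k + w))

def frameOK (e k z : ℕ) : Bool :=
  bAll k (fun i => leB k z i i) &&
  bAll (k * (k * k)) (fun q =>
    !(leB k z (q / (k * k)) (q / k % k) && leB k z (q / k % k) (q % k)) ||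
      leB k z (q / (k * k)) (q % k)) &&
  bAll ((e + 1) * (k * k)) (fun q =>
    (!(leB k z (q / k % k) (q % k) && vpB e k z (q / (k * k)) (q / k % k)) ||
      vpB e k z (q / (k * k)) (q % k)) &&
    (!(leB k z (q / k % k) (q % k) && vnB e k z (q / (k * k)) (q / k % k)) ||
      vnB e k z (q / (k * k)) (q % k)))

def tabCond (e k z c w : ℕ) : Bool :=
  if c.unpair.1 = 1 then
    (tabB e k z c 1 w == tabB e k z c.unpair.2 0 w) &&
    (tabB e k z c 0 w == tabB e k z c.unpair.2 1 w)
  else if c.unpair.1 = 2 then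
    (tabB e k z c 1 w ==
      (tabB e k z c.unpair.2.unpair.1 1 w && tabB e k z c.unpair.2.unpair.2 1 w)) &&
    (tabB e k z c 0 w ==
      (tabB e k z c.unpair.2.unpair.1 0 w || tabB e k z c.unpair.2.unpair.2 0 w))
  else if c.unpair.1 = 3 then
    (tabB e k z c 1 w ==
      (tabB e k z c.unpair.2.unpair.1 1 w || tabB e k z c.unpair.2.unpair.2 1 w)) &&
    (tabB e k z c 0 w ==
      (tabB e k z c.unpair.2.unpair.1 0 w && tabB e k z c.unpair.2.unpair.2 0 w))
  else if c.unpair.1 = 4 then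
    (tabB e k z c 1 w == bAll k (fun w' =>
      !leB k z w w' || !tabB e k z c.unpair.2.unpair.1 1 w' ||
        tabB e k z c.unpair.2.unpair.2 1 w')) &&
    (tabB e k z c 0 w ==
      (tabB e k z c.unpair.2.unpair.1 1 w && tabB e k z c.unpair.2.unpair.2 0 w))
  else if c.unpair.1 = 5 then
    (tabB e k z c 1 w == bAll (k * k) (fun r =>
      !leB k z w (r / k) || !rpbB k z (r / k) (r % k) || tabB e k z c.unpair.2 1 (r % k))) &&
    (tabB e k z c 0 w == bAll k (fun w' =>
      !leB k z w w' || bAny k (fun u => rnbB k z w' u && tabB e k z c.unpair.2 0 u)))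
  else if c.unpair.1 = 6 then
    (tabB e k z c 1 w == bAll k (fun w' =>
      !leB k z w w' || bAny k (fun u => rpdB k z w' u && tabB e k z c.unpair.2 1 u))) &&
    (tabB e k z c 0 w == bAll (k * k) (fun r =>
      !leB k z w (r / k) || !rndB k z (r / k) (r % k) || tabB e k z c.unpair.2 0 (r % k)))
  else
    (tabB e k z c 1 w == vpB e k z c.unpair.2 w) &&
    (tabB e k z c 0 w == vnB e k z c.unpair.2 w)

def tabOK (e k z : ℕ) : Bool :=
  bAll ((e + 1) * k) (fun q => tabCond e k z (q / k) (q % k))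

def refuted (e k z : ℕ) : Bool := bAny k (fun w => !tabB e k z e 1 w)

def zBound (e k : ℕ) : ℕ := 5 * (k * k) + 2 * ((e + 1) * k) + 2 * ((e + 1) * k)

def checkOne (e k z : ℕ) : Bool := frameOK e k z && tabOK e k z && refuted e k z

def fCN4K (e : ℕ) : Bool :=
  !(bAny (16 ^ (e + 1) + 1) (fun k => bAny (2 ^ zBound e k) (fun z => checkOne e k z)))

/- decoding of flattened loop indices -/

lemma pair_decode {k i j : ℕ} (hj : j < k) :
    (i * k + j) / k = i ∧ (i * k + j) % k = j := by
  have hk : 0 < k := lt_of_le_of_lt (Nat.zero_le j) hj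
  constructor
  · rw [Nat.add_comm, Nat.add_mul_div_right _ _ hk, Nat.div_eq_of_lt hj, Nat.zero_add]
  · rw [Nat.add_comm, Nat.add_mul_mod_self_right, Nat.mod_eq_of_lt hj]

lemma tri_decode {k n i j : ℕ} (hi : i < k) (hj : j < k) :
    (n * (k * k) + (i * k + j)) / (k * k) = n ∧
    (n * (k * k) + (i * k + j)) / k % k = i ∧
    (n * (k * k) + (i * k + j)) % k = j := by
  have hk : 0 < k := lt_of_le_of_lt (Nat.zero_le j) hj
  have hr : i * k + j < k * k := by
    calc i * k + j < i * k + k := by omega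
    _ = (i + 1) * k := by ring
    _ ≤ k * k := Nat.mul_le_mul_right k hi
  have e1 : n * (k * k) + (i * k + j) = (n * k + i) * k + j := by ring
  refine ⟨?_, ?_, ?_⟩
  · rw [Nat.add_comm, Nat.add_mul_div_right _ _ (Nat.mul_pos hk hk), Nat.div_eq_of_lt hr, Nat.zero_add]
  · rw [e1, (pair_decode hj).1, (pair_decode hi).2]
  · rw [e1, Nat.add_comm, Nat.add_mul_mod_self_right, Nat.mod_eq_of_lt hj]

lemma exists_bits : ∀ (B : ℕ) (g : ℕ → Bool), ∃ z, z < 2 ^ B ∧ ∀ i, i < B → bitf z i = g i := by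
  intro B
  induction B with
  | zero => exact fun g => ⟨0, by norm_num, fun i hi => absurd hi (Nat.not_lt_zero i)⟩
  | succ B ih =>
      intro g
      obtain ⟨z', hz', hbits⟩ := ih (fun i => g (i + 1))
      refine ⟨2 * z' + (if g 0 then 1 else 0), ?_, ?_⟩
      · have : (if g 0 then 1 else 0) ≤ 1 := by split <;> omega
        have : 2 * z' + (if g 0 then 1 else 0) < 2 * 2 ^ B := by omega
        calc 2 * z' + (if g 0 then 1 else 0) < 2 * 2 ^ B := this
        _ = 2 ^ (B + 1) := by rw [Nat.pow_succ]; ring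
      · intro i hi
        cases i with
        | zero =>
            simp only [bitf, Nat.pow_zero, Nat.div_one]
            rcases hg : g 0 with _ | _ <;> simp [hg] <;> omega
        | succ i =>
            have hdiv : (2 * z' + (if g 0 then 1 else 0)) / 2 = z' := by
              split <;> omega
            have : (2 * z' + (if g 0 then 1 else 0)) / 2 ^ (i + 1) = z' / 2 ^ i := by
              rw [Nat.pow_succ, Nat.mul_comm (2 ^ i) 2, ← Nat.div_div_eq_div_mul, hdiv]
            simp only [bitf, this]
            exact hbits i (by omega)

/- ============ direction A : checker success → countermodel ============ -/

lemma impB2_intro {a b : Bool} (h : a = true → b = true) : (!a || b) = true := by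
  cases a <;> simp_all
lemma impB2_elim {a b : Bool} (h : (!a || b) = true) (ha : a = true) : b = true := by
  cases a <;> simp_all
lemma impB3_intro {a b c : Bool} (h : a = true → b = true → c = true) :
    (!a || !b || c) = true := by cases a <;> cases b <;> simp_all
lemma impB3_elim {a b c : Bool} (h : (!a || !b || c) = true) (ha : a = true) (hb : b = true) :
    c = true := by cases a <;> cases b <;> simp_all

lemma frameOK_spec {e k z : ℕ} (hf : frameOK e k z = true) :
    (∀ i, i < k → leB k z i i = true) ∧
    (∀ i j l, i < k → j < k → l < k →
      leB k z i j = true → leB k z j l = true → leB k z i l = true) ∧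
    (∀ n i j, n ≤ e → i < k → j < k → leB k z i j = true →
      (vpB e k z n i = true → vpB e k z n j = true) ∧
      (vnB e k z n i = true → vnB e k z n j = true)) := by
  rw [frameOK, Bool.and_eq_true, Bool.and_eq_true] at hf
  obtain ⟨⟨h1, h2⟩, h3⟩ := hf
  refine ⟨fun i hi => bAll_eq_true.mp h1 i hi, ?_, ?_⟩
  · intro i j l hi hj hl hij hjl
    have hr : j * k + l < k * k := by
      calc j * k + l < j * k + k := by omega
      _ = (j + 1) * k := by ring
      _ ≤ k * k := Nat.mul_le_mul_right k hj
    have hq : i * (k * k) + (j * k + l) < k * (k * k) := by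
      calc i * (k * k) + (j * k + l) < i * (k * k) + k * k := by omega
      _ = (i + 1) * (k * k) := by ring
      _ ≤ k * (k * k) := Nat.mul_le_mul_right (k * k) hi
    have := bAll_eq_true.mp h2 _ hq
    obtain ⟨d1, d2, d3⟩ := tri_decode (k := k) (n := i) hj hl
    rw [d1, d2, d3] at this
    exact impB2_elim this (by rw [hij, hjl]; rfl)
  · intro n i j hn hi hj hij
    have hr : i * k + j < k * k := by
      calc i * k + j < i * k + k := by omega
      _ = (i + 1) * k := by ring
      _ ≤ k * k := Nat.mul_le_mul_right k hi
    have hq : n * (k * k) + (i * k + j) < (e + 1) * (k * k) := by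
      calc n * (k * k) + (i * k + j) < n * (k * k) + k * k := by omega
      _ = (n + 1) * (k * k) := by ring
      _ ≤ (e + 1) * (k * k) := Nat.mul_le_mul_right (k * k) (by omega)
    have := bAll_eq_true.mp h3 _ hq
    obtain ⟨d1, d2, d3⟩ := tri_decode (k := k) (n := n) hi hj
    rw [d1, d2, d3, Bool.and_eq_true] at this
    constructor
    · intro hv
      exact impB2_elim this.1 (by rw [hij, hv]; rfl)
    · intro hv
      exact impB2_elim this.2 (by rw [hij, hv]; rfl)

lemma tabOK_spec {e k z : ℕ} (ht : tabOK e k z = true) :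
    ∀ c w, c ≤ e → w < k → tabCond e k z c w = true := by
  intro c w hc hw
  have hq : c * k + w < (e + 1) * k := by
    calc c * k + w < c * k + k := by omega
    _ = (c + 1) * k := by ring
    _ ≤ (e + 1) * k := Nat.mul_le_mul_right k (by omega)
  have := bAll_eq_true.mp (by rw [tabOK] at ht; exact ht) _ hq
  rwa [(pair_decode hw).1, (pair_decode hw).2] at this

def natF (e k z : ℕ) (hf : frameOK e k z = true) : CN4KFrame where
  W := Fin k
  le i j := leB k z i.val j.val = true
  le_refl i := (frameOK_spec hf).1 i.val i.isLt
  le_trans a b c h1 h2 :=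
    (frameOK_spec hf).2.1 a.val b.val c.val a.isLt b.isLt c.isLt h1 h2
  Rpb i j := rpbB k z i.val j.val = true
  Rnb i j := rnbB k z i.val j.val = true
  Rpd i j := rpdB k z i.val j.val = true
  Rnd i j := rndB k z i.val j.val = true

def natM (e k z : ℕ) (hf : frameOK e k z = true) : CN4KModel (natF e k z hf) where
  vp n i := n ≤ e ∧ vpB e k z n i.val = true
  vn n i := n ≤ e ∧ vnB e k z n i.val = true
  vp_mono n i j h hv :=
    ⟨hv.1, ((frameOK_spec hf).2.2 n i.val j.val hv.1 i.isLt j.isLt h).1 hv.2⟩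
  vn_mono n i j h hv :=
    ⟨hv.1, ((frameOK_spec hf).2.2 n i.val j.val hv.1 i.isLt j.isLt h).2 hv.2⟩

lemma unpair2_lt {c : ℕ} (h : 1 ≤ c.unpair.1) : c.unpair.2 < c := unpair_right_lt h

lemma tab_correct (e k z : ℕ) (hf : frameOK e k z = true) (ht : tabOK e k z = true) :
    ∀ c, c ≤ e → ∀ (b : Bool) (w : Fin k),
      ((natM e k z hf).sup (decodeF c) b w ↔ tabB e k z c (cond b 1 0) w = true) := by
  intro c
  induction c using Nat.strong_induction_on with
  | _ c IH =>
    intro hce b w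
    have htc := tabOK_spec ht c w.val hce w.isLt
    have hkpos : 0 < k := lt_of_le_of_lt (Nat.zero_le _) w.isLt
    rw [decodeF]
    by_cases h1 : c.unpair.1 = 1
    · rw [dif_pos h1]
      rw [tabCond, if_pos h1, Bool.and_eq_true, beq_iff_eq, beq_iff_eq] at htc
      have hx : c.unpair.2 < c := unpair2_lt (by omega)
      have ihx := IH c.unpair.2 hx (by omega)
      cases b
      · simp only [CN4KModel.sup, cond_false, htc.2]
        exact ihx true w
      · simp only [CN4KModel.sup, cond_true, htc.1]
        exact ihx false w
    · rw [dif_neg h1]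
      by_cases h2 : c.unpair.1 = 2
      · rw [dif_pos h2]
        rw [tabCond, if_neg h1, if_pos h2, Bool.and_eq_true, beq_iff_eq, beq_iff_eq] at htc
        have hx : c.unpair.2 < c := unpair2_lt (by omega)
        have hx1 : c.unpair.2.unpair.1 < c := lt_of_le_of_lt (Nat.unpair_left_le _) hx
        have hx2 : c.unpair.2.unpair.2 < c := lt_of_le_of_lt (Nat.unpair_right_le _) hx
        have ih1 := IH _ hx1 (by omega)
        have ih2 := IH _ hx2 (by omega)
        cases b
        · simp only [CN4KModel.sup, cond_false, htc.2, Bool.or_eq_true]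
          rw [ih1 false w, ih2 false w]
          simp only [cond_true, cond_false]
        · simp only [CN4KModel.sup, cond_true, htc.1, Bool.and_eq_true]
          rw [ih1 true w, ih2 true w]
          simp only [cond_true, cond_false]
      · rw [dif_neg h2]
        by_cases h3 : c.unpair.1 = 3
        · rw [dif_pos h3]
          rw [tabCond, if_neg h1, if_neg h2, if_pos h3, Bool.and_eq_true,
            beq_iff_eq, beq_iff_eq] at htc
          have hx : c.unpair.2 < c := unpair2_lt (by omega)
          have hx1 : c.unpair.2.unpair.1 < c := lt_of_le_of_lt (Nat.unpair_left_le _) hx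
          have hx2 : c.unpair.2.unpair.2 < c := lt_of_le_of_lt (Nat.unpair_right_le _) hx
          have ih1 := IH _ hx1 (by omega)
          have ih2 := IH _ hx2 (by omega)
          cases b
          · simp only [CN4KModel.sup, cond_false, htc.2, Bool.and_eq_true]
            rw [ih1 false w, ih2 false w]
            simp only [cond_true, cond_false]
          · simp only [CN4KModel.sup, cond_true, htc.1, Bool.or_eq_true]
            rw [ih1 true w, ih2 true w]
            simp only [cond_true, cond_false]
        · rw [dif_neg h3]
          by_cases h4 : c.unpair.1 = 4
          · rw [dif_pos h4]
            rw [tabCond, if_neg h1, if_neg h2, if_neg h3, if_pos h4, Bool.and_eq_true,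
              beq_iff_eq, beq_iff_eq] at htc
            have hx : c.unpair.2 < c := unpair2_lt (by omega)
            have hx1 : c.unpair.2.unpair.1 < c := lt_of_le_of_lt (Nat.unpair_left_le _) hx
            have hx2 : c.unpair.2.unpair.2 < c := lt_of_le_of_lt (Nat.unpair_right_le _) hx
            have ih1 := IH _ hx1 (by omega)
            have ih2 := IH _ hx2 (by omega)
            cases b
            · simp only [CN4KModel.sup, cond_false, htc.2, Bool.and_eq_true]
              rw [ih1 true w, ih2 false w]
              simp only [cond_true, cond_false]
            · simp only [CN4KModel.sup, cond_true, htc.1]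
              rw [bAll_eq_true]
              constructor
              · intro hs w' hw'
                apply impB3_intro
                intro hle htab
                exact (ih2 true ⟨w', hw'⟩).mp
                  (hs ⟨w', hw'⟩ hle ((ih1 true ⟨w', hw'⟩).mpr htab))
              · intro hs w' hle hφ
                have := impB3_elim (hs w'.val w'.isLt) hle ((ih1 true w').mp hφ)
                exact (ih2 true w').mpr this
          · rw [dif_neg h4]
            by_cases h5 : c.unpair.1 = 5
            · rw [dif_pos h5]
              rw [tabCond, if_neg h1, if_neg h2, if_neg h3, if_neg h4, if_pos h5,
                Bool.and_eq_true, beq_iff_eq, beq_iff_eq] at htc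
              have hx : c.unpair.2 < c := unpair2_lt (by omega)
              have ihx := IH _ hx (by omega)
              cases b
              · -- box false
                simp only [CN4KModel.sup, cond_false, htc.2]
                rw [bAll_eq_true]
                constructor
                · intro hs w' hw'
                  apply impB2_intro
                  intro hle
                  obtain ⟨u, hru, hsu⟩ := hs ⟨w', hw'⟩ hle
                  rw [bAny_eq_true]
                  exact ⟨u.val, u.isLt, by
                    rw [Bool.and_eq_true]
                    exact ⟨hru, (ihx false u).mp hsu⟩⟩
                · intro hs w' hle
                  have := impB2_elim (hs w'.val w'.isLt) hle
                  rw [bAny_eq_true] at this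
                  obtain ⟨u, hu, hb⟩ := this
                  rw [Bool.and_eq_true] at hb
                  exact ⟨⟨u, hu⟩, hb.1, (ihx false ⟨u, hu⟩).mpr hb.2⟩
              · -- box true
                simp only [CN4KModel.sup, cond_true, htc.1]
                rw [bAll_eq_true]
                constructor
                · intro hs r hr
                  have hi : r / k < k := Nat.div_lt_iff_lt_mul hkpos |>.mpr hr
                  have hj : r % k < k := Nat.mod_lt r hkpos
                  apply impB3_intro
                  intro hle hrpb
                  exact (ihx true ⟨r % k, hj⟩).mp (hs ⟨r / k, hi⟩ hle ⟨r % k, hj⟩ hrpb)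
                · intro hs w' hle u hru
                  have hr : w'.val * k + u.val < k * k := by
                    calc w'.val * k + u.val < w'.val * k + k := by omega
                    _ = (w'.val + 1) * k := by ring
                    _ ≤ k * k := Nat.mul_le_mul_right k w'.isLt
                  have := hs _ hr
                  rw [(pair_decode u.isLt).1, (pair_decode u.isLt).2] at this
                  exact (ihx true u).mpr (impB3_elim this hle hru)
            · rw [dif_neg h5]
              by_cases h6 : c.unpair.1 = 6
              · rw [dif_pos h6]
                rw [tabCond, if_neg h1, if_neg h2, if_neg h3, if_neg h4, if_neg h5,
                  if_pos h6, Bool.and_eq_true, beq_iff_eq, beq_iff_eq] at htc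
                have hx : c.unpair.2 < c := unpair2_lt (by omega)
                have ihx := IH _ hx (by omega)
                cases b
                · -- dia false
                  simp only [CN4KModel.sup, cond_false, htc.2]
                  rw [bAll_eq_true]
                  constructor
                  · intro hs r hr
                    have hi : r / k < k := Nat.div_lt_iff_lt_mul hkpos |>.mpr hr
                    have hj : r % k < k := Nat.mod_lt r hkpos
                    apply impB3_intro
                    intro hle hrnd
                    exact (ihx false ⟨r % k, hj⟩).mp (hs ⟨r / k, hi⟩ hle ⟨r % k, hj⟩ hrnd)
                  · intro hs w' hle u hru
                    have hr : w'.val * k + u.val < k * k := by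
                      calc w'.val * k + u.val < w'.val * k + k := by omega
                      _ = (w'.val + 1) * k := by ring
                      _ ≤ k * k := Nat.mul_le_mul_right k w'.isLt
                    have := hs _ hr
                    rw [(pair_decode u.isLt).1, (pair_decode u.isLt).2] at this
                    exact (ihx false u).mpr (impB3_elim this hle hru)
                · -- dia true
                  simp only [CN4KModel.sup, cond_true, htc.1]
                  rw [bAll_eq_true]
                  constructor
                  · intro hs w' hw'
                    apply impB2_intro
                    intro hle
                    obtain ⟨u, hru, hsu⟩ := hs ⟨w', hw'⟩ hle
                    rw [bAny_eq_true]
                    exact ⟨u.val, u.isLt, by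
                      rw [Bool.and_eq_true]
                      exact ⟨hru, (ihx true u).mp hsu⟩⟩
                  · intro hs w' hle
                    have := impB2_elim (hs w'.val w'.isLt) hle
                    rw [bAny_eq_true] at this
                    obtain ⟨u, hu, hb⟩ := this
                    rw [Bool.and_eq_true] at hb
                    exact ⟨⟨u, hu⟩, hb.1, (ihx true ⟨u, hu⟩).mpr hb.2⟩
              · rw [dif_neg h6]
                rw [tabCond, if_neg h1, if_neg h2, if_neg h3, if_neg h4, if_neg h5,
                  if_neg h6, Bool.and_eq_true, beq_iff_eq, beq_iff_eq] at htc
                have hxe : c.unpair.2 ≤ e := le_trans (Nat.unpair_right_le c) hce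
                cases b
                · simp only [CN4KModel.sup, cond_false, htc.2]
                  exact ⟨fun h => h.2, fun h => ⟨hxe, h⟩⟩
                · simp only [CN4KModel.sup, cond_true, htc.1]
                  exact ⟨fun h => h.2, fun h => ⟨hxe, h⟩⟩

lemma dirA {e k z : ℕ} (hc : checkOne e k z = true) : ¬ CN4KValid (decodeF e) := by
  rw [checkOne, Bool.and_eq_true, Bool.and_eq_true] at hc
  obtain ⟨⟨hf, ht⟩, hr⟩ := hc
  rw [refuted, bAny_eq_true] at hr
  obtain ⟨w, hw, hb⟩ := hr
  intro hv
  have := hv (natF e k z hf) (natM e k z hf) ⟨w, hw⟩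
  have h2 := (tab_correct e k z hf ht e (le_refl e) true ⟨w, hw⟩).mp this
  simp only [cond_true] at h2
  rw [h2] at hb
  simp at hb

/- ============ direction B : encoding data into a number ============ -/

noncomputable def d2 {k : ℕ} (R : Fin k → Fin k → Prop) (r : ℕ) : Bool :=
  if hr : r / k < k ∧ r % k < k then
    @decide (R ⟨r / k, hr.1⟩ ⟨r % k, hr.2⟩) (Classical.propDecidable _)
  else false

noncomputable def dv {k : ℕ} (v : ℕ → Fin k → Prop) (r : ℕ) : Bool :=
  if hr : r % k < k then @decide (v (r / k) ⟨r % k, hr⟩) (Classical.propDecidable _)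
  else false

noncomputable def dt {k : ℕ} (tab : ℕ → Bool → Fin k → Prop) (r : ℕ) : Bool :=
  if hr : r % k < k then
    @decide (tab (r / k / 2) (decide (r / k % 2 = 1)) ⟨r % k, hr⟩) (Classical.propDecidable _)
  else false

lemma d2_spec {k : ℕ} (R : Fin k → Fin k → Prop) (i j : Fin k) :
    d2 R (i.val * k + j.val) = true ↔ R i j := by
  classical
  have e1 := (pair_decode (k := k) (i := i.val) j.isLt).1
  have e2 := (pair_decode (k := k) (i := i.val) j.isLt).2
  have hc : (i.val * k + j.val) / k < k ∧ (i.val * k + j.val) % k < k := by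
    rw [e1, e2]; exact ⟨i.isLt, j.isLt⟩
  rw [d2, dif_pos hc, decide_eq_true_eq]
  have f1 : (⟨(i.val * k + j.val) / k, hc.1⟩ : Fin k) = i := Fin.ext e1
  have f2 : (⟨(i.val * k + j.val) % k, hc.2⟩ : Fin k) = j := Fin.ext e2
  rw [f1, f2]

lemma dv_spec {k : ℕ} (v : ℕ → Fin k → Prop) (n : ℕ) (i : Fin k) :
    dv v (n * k + i.val) = true ↔ v n i := by
  classical
  have e1 := (pair_decode (k := k) (i := n) i.isLt).1
  have e2 := (pair_decode (k := k) (i := n) i.isLt).2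
  have hc : (n * k + i.val) % k < k := by rw [e2]; exact i.isLt
  rw [dv, dif_pos hc, decide_eq_true_eq]
  have f1 : (⟨(n * k + i.val) % k, hc⟩ : Fin k) = i := Fin.ext e2
  rw [e1, f1]

lemma dt_spec {k : ℕ} (tab : ℕ → Bool → Fin k → Prop) (c : ℕ) (b : Bool) (i : Fin k) :
    dt tab ((2 * c + cond b 1 0) * k + i.val) = true ↔ tab c b i := by
  classical
  have e1 := (pair_decode (k := k) (i := 2 * c + cond b 1 0) i.isLt).1
  have e2 := (pair_decode (k := k) (i := 2 * c + cond b 1 0) i.isLt).2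
  have hc : ((2 * c + cond b 1 0) * k + i.val) % k < k := by rw [e2]; exact i.isLt
  rw [dt, dif_pos hc, decide_eq_true_eq]
  have f1 : (⟨((2 * c + cond b 1 0) * k + i.val) % k, hc⟩ : Fin k) = i := Fin.ext e2
  have hb : cond b 1 0 ≤ 1 := by cases b <;> simp
  have e3 : ((2 * c + cond b 1 0) * k + i.val) / k / 2 = c := by rw [e1]; omega
  have e4 : (decide (((2 * c + cond b 1 0) * k + i.val) / k % 2 = 1)) = b := by
    rw [e1]
    cases b
    · simp only [cond_false]; rw [decide_eq_false] <;> omega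
    · simp only [cond_true]; rw [decide_eq_true] <;> omega
  rw [e3, e4, f1]

noncomputable def gfun (e k : ℕ) (le R1 R2 R3 R4 : Fin k → Fin k → Prop)
    (vp vn : ℕ → Fin k → Prop) (tab : ℕ → Bool → Fin k → Prop) : ℕ → Bool := fun idx =>
  if idx < k * k then d2 le idx
  else if idx < 2 * (k * k) then d2 R1 (idx - k * k)
  else if idx < 3 * (k * k) then d2 R2 (idx - 2 * (k * k))
  else if idx < 4 * (k * k) then d2 R3 (idx - 3 * (k * k))
  else if idx < 5 * (k * k) then d2 R4 (idx - 4 * (k * k))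
  else if idx < 5 * (k * k) + (e + 1) * k then dv vp (idx - 5 * (k * k))
  else if idx < 5 * (k * k) + 2 * ((e + 1) * k) then dv vn (idx - (5 * (k * k) + (e + 1) * k))
  else dt tab (idx - (5 * (k * k) + 2 * ((e + 1) * k)))

lemma existsZ (e k : ℕ) (le R1 R2 R3 R4 : Fin k → Fin k → Prop)
    (vp vn : ℕ → Fin k → Prop) (tab : ℕ → Bool → Fin k → Prop) :
    ∃ z, z < 2 ^ zBound e k ∧
      (∀ i j : Fin k, (leB k z i.val j.val = true ↔ le i j)) ∧
      (∀ i j : Fin k, (rpbB k z i.val j.val = true ↔ R1 i j)) ∧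
      (∀ i j : Fin k, (rnbB k z i.val j.val = true ↔ R2 i j)) ∧
      (∀ i j : Fin k, (rpdB k z i.val j.val = true ↔ R3 i j)) ∧
      (∀ i j : Fin k, (rndB k z i.val j.val = true ↔ R4 i j)) ∧
      (∀ n, n ≤ e → ∀ i : Fin k, (vpB e k z n i.val = true ↔ vp n i)) ∧
      (∀ n, n ≤ e → ∀ i : Fin k, (vnB e k z n i.val = true ↔ vn n i)) ∧
      (∀ c, c ≤ e → ∀ (b : Bool) (i : Fin k),
        (tabB e k z c (cond b 1 0) i.val = true ↔ tab c b i)) := by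
  obtain ⟨z, hz, hbit⟩ := exists_bits (zBound e k) (gfun e k le R1 R2 R3 R4 vp vn tab)
  have hrij : ∀ i j : Fin k, (i.val * k + j.val) < k * k := by
    intro i j
    calc i.val * k + j.val < i.val * k + k := by omega
    _ = (i.val + 1) * k := by ring
    _ ≤ k * k := Nat.mul_le_mul_right k i.isLt
  have hnk : ∀ n, n ≤ e → ∀ i : Fin k, n * k + i.val < (e + 1) * k := by
    intro n hn i
    calc n * k + i.val < n * k + k := by omega
    _ = (n + 1) * k := by ring
    _ ≤ (e + 1) * k := Nat.mul_le_mul_right k (by omega)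
  have htk : ∀ c, c ≤ e → ∀ b : Bool, ∀ i : Fin k,
      (2 * c + cond b 1 0) * k + i.val < 2 * ((e + 1) * k) := by
    intro c hc b i
    have hb : cond b 1 0 ≤ 1 := by cases b <;> simp
    calc (2 * c + cond b 1 0) * k + i.val < (2 * c + cond b 1 0) * k + k := by omega
    _ = (2 * c + cond b 1 0 + 1) * k := by ring
    _ ≤ (2 * (e + 1)) * k := Nat.mul_le_mul_right k (by omega)
    _ = 2 * ((e + 1) * k) := by ring
  refine ⟨z, hz, ?_, ?_, ?_, ?_, ?_, ?_, ?_, ?_⟩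
  · intro i j
    have hr := hrij i j
    have hidx : i.val * k + j.val < zBound e k := by unfold zBound; omega
    rw [leB, hbit _ hidx, gfun]
    rw [if_pos hr]
    exact d2_spec le i j
  · intro i j
    have hr := hrij i j
    have hidx : k * k + (i.val * k + j.val) < zBound e k := by unfold zBound; omega
    rw [rpbB, hbit _ hidx, gfun]
    rw [if_neg (by omega), if_pos (by omega), Nat.add_sub_cancel_left]
    exact d2_spec R1 i j
  · intro i j
    have hr := hrij i j
    have hidx : 2 * (k * k) + (i.val * k + j.val) < zBound e k := by unfold zBound; omega
    rw [rnbB, hbit _ hidx, gfun]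
    rw [if_neg (by omega), if_neg (by omega), if_pos (by omega), Nat.add_sub_cancel_left]
    exact d2_spec R2 i j
  · intro i j
    have hr := hrij i j
    have hidx : 3 * (k * k) + (i.val * k + j.val) < zBound e k := by unfold zBound; omega
    rw [rpdB, hbit _ hidx, gfun]
    rw [if_neg (by omega), if_neg (by omega), if_neg (by omega), if_pos (by omega),
      Nat.add_sub_cancel_left]
    exact d2_spec R3 i j
  · intro i j
    have hr := hrij i j
    have hidx : 4 * (k * k) + (i.val * k + j.val) < zBound e k := by unfold zBound; omega
    rw [rndB, hbit _ hidx, gfun]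
    rw [if_neg (by omega), if_neg (by omega), if_neg (by omega), if_neg (by omega),
      if_pos (by omega), Nat.add_sub_cancel_left]
    exact d2_spec R4 i j
  · intro n hn i
    have hr := hnk n hn i
    have hidx : 5 * (k * k) + (n * k + i.val) < zBound e k := by unfold zBound; omega
    rw [vpB, hbit _ hidx, gfun]
    rw [if_neg (by omega), if_neg (by omega), if_neg (by omega), if_neg (by omega),
      if_neg (by omega), if_pos (by omega), Nat.add_sub_cancel_left]
    exact dv_spec vp n i
  · intro n hn i
    have hr := hnk n hn i
    have hidx : 5 * (k * k) + (e + 1) * k + (n * k + i.val) < zBound e k := by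
      unfold zBound; omega
    rw [vnB, hbit _ hidx, gfun]
    rw [if_neg (by omega), if_neg (by omega), if_neg (by omega), if_neg (by omega),
      if_neg (by omega), if_neg (by omega), if_pos (by omega)]
    have : 5 * (k * k) + (e + 1) * k + (n * k + i.val) - (5 * (k * k) + (e + 1) * k)
        = n * k + i.val := by omega
    rw [this]
    exact dv_spec vn n i
  · intro c hc b i
    have hr := htk c hc b i
    have hidx : 5 * (k * k) + 2 * ((e + 1) * k) + ((2 * c + cond b 1 0) * k + i.val)
        < zBound e k := by unfold zBound; omega
    rw [tabB, hbit _ hidx, gfun]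
    rw [if_neg (by omega), if_neg (by omega), if_neg (by omega), if_neg (by omega),
      if_neg (by omega), if_neg (by omega), if_neg (by omega)]
    have : 5 * (k * k) + 2 * ((e + 1) * k) + ((2 * c + cond b 1 0) * k + i.val)
        - (5 * (k * k) + 2 * ((e + 1) * k)) = (2 * c + cond b 1 0) * k + i.val := by omega
    rw [this]
    exact dt_spec tab c b i

/- ============ direction B main ============ -/

lemma boolEq {a b : Bool} (h : a = true ↔ b = true) : a = b := by
  cases a <;> cases b <;> simp_all

lemma dirB (φ0 : MFm) (h : ¬ CN4KValid φ0) :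
    ∃ k z, k ≤ 16 ^ (φ0.encode + 1) ∧ z < 2 ^ zBound φ0.encode k ∧
      checkOne φ0.encode k z = true := by
  obtain ⟨k, hk, F, M, hW, w0, hw0⟩ := fmp φ0 h
  obtain ⟨W, le, hrefl, htrans, R1, R2, R3, R4⟩ := F
  change W = Fin k at hW
  subst hW
  set e := φ0.encode with he
  obtain ⟨z, hz, hle, hrpb, hrnb, hrpd, hrnd, hvp, hvn, htab⟩ :=
    existsZ e k le R1 R2 R3 R4 M.vp M.vn (fun c b i => M.sup (decodeF c) b i)
  have htab1 : ∀ c, c ≤ e → ∀ i : Fin k,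
      (tabB e k z c 1 i.val = true ↔ M.sup (decodeF c) true i) := by
    intro c hc i
    have := htab c hc true i
    simpa using this
  have htab0 : ∀ c, c ≤ e → ∀ i : Fin k,
      (tabB e k z c 0 i.val = true ↔ M.sup (decodeF c) false i) := by
    intro c hc i
    have := htab c hc false i
    simpa using this
  refine ⟨k, z, hk, hz, ?_⟩
  have hfOK : frameOK e k z = true := by
    rw [frameOK, Bool.and_eq_true, Bool.and_eq_true]
    refine ⟨⟨?_, ?_⟩, ?_⟩
    · apply bAll_eq_true.mpr
      intro i hi
      exact (hle ⟨i, hi⟩ ⟨i, hi⟩).mpr (hrefl ⟨i, hi⟩)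
    · apply bAll_eq_true.mpr
      intro q hq
      have hk0 : 0 < k := by
        rcases Nat.eq_zero_or_pos k with h0 | h0
        · subst h0; simp at hq
        · exact h0
      have hi : q / (k * k) < k := (Nat.div_lt_iff_lt_mul (Nat.mul_pos hk0 hk0)).mpr
        (lt_of_lt_of_eq hq (by ring))
      have hj : q / k % k < k := Nat.mod_lt _ hk0
      have hl : q % k < k := Nat.mod_lt _ hk0
      apply impB2_intro
      intro hand
      rw [Bool.and_eq_true] at hand
      exact (hle ⟨q / (k * k), hi⟩ ⟨q % k, hl⟩).mpr
        (htrans _ _ _ ((hle ⟨q / (k * k), hi⟩ ⟨q / k % k, hj⟩).mp hand.1)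
          ((hle ⟨q / k % k, hj⟩ ⟨q % k, hl⟩).mp hand.2))
    · apply bAll_eq_true.mpr
      intro q hq
      have hk0 : 0 < k := by
        rcases Nat.eq_zero_or_pos k with h0 | h0
        · subst h0; simp at hq
        · exact h0
      have hn : q / (k * k) ≤ e := by
        have : q / (k * k) < e + 1 :=
          (Nat.div_lt_iff_lt_mul (Nat.mul_pos hk0 hk0)).mpr (lt_of_lt_of_eq hq (by ring))
        omega
      have hi : q / k % k < k := Nat.mod_lt _ hk0
      have hj : q % k < k := Nat.mod_lt _ hk0
      rw [Bool.and_eq_true]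
      constructor
      · apply impB2_intro
        intro hand
        rw [Bool.and_eq_true] at hand
        exact (hvp _ hn ⟨q % k, hj⟩).mpr
          (M.vp_mono _ _ _ ((hle ⟨q / k % k, hi⟩ ⟨q % k, hj⟩).mp hand.1)
            ((hvp _ hn ⟨q / k % k, hi⟩).mp hand.2))
      · apply impB2_intro
        intro hand
        rw [Bool.and_eq_true] at hand
        exact (hvn _ hn ⟨q % k, hj⟩).mpr
          (M.vn_mono _ _ _ ((hle ⟨q / k % k, hi⟩ ⟨q % k, hj⟩).mp hand.1)
            ((hvn _ hn ⟨q / k % k, hi⟩).mp hand.2))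
  have htOK : tabOK e k z = true := by
    rw [tabOK]
    apply bAll_eq_true.mpr
    intro q hq
    have hk0 : 0 < k := by
      rcases Nat.eq_zero_or_pos k with h0 | h0
      · subst h0; simp at hq
      · exact h0
    have hc : q / k ≤ e := by
      have : q / k < e + 1 := (Nat.div_lt_iff_lt_mul hk0).mpr hq
      omega
    have hwlt : q % k < k := Nat.mod_lt _ hk0
    set c := q / k with hcq
    have hwv : q % k = (⟨q % k, hwlt⟩ : Fin k).val := rfl
    rw [hwv]
    set w : Fin k := ⟨q % k, hwlt⟩ with hwdef
    clear hwv hwdef hcq hq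
    rw [tabCond]
    by_cases h1 : c.unpair.1 = 1
    · rw [if_pos h1, Bool.and_eq_true, beq_iff_eq, beq_iff_eq]
      have hdec : decodeF c = .neg (decodeF c.unpair.2) := by rw [decodeF, dif_pos h1]
      have hx : c.unpair.2 ≤ e := le_trans (Nat.unpair_right_le c) hc
      constructor
      · apply boolEq
        rw [htab1 c hc w, hdec, htab0 _ hx w]
        exact Iff.rfl
      · apply boolEq
        rw [htab0 c hc w, hdec, htab1 _ hx w]
        exact Iff.rfl
    · rw [if_neg h1]
      by_cases h2 : c.unpair.1 = 2
      · rw [if_pos h2, Bool.and_eq_true, beq_iff_eq, beq_iff_eq]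
        have hdec : decodeF c =
            .conj (decodeF c.unpair.2.unpair.1) (decodeF c.unpair.2.unpair.2) := by
          rw [decodeF, dif_neg h1, dif_pos h2]
        have hx : c.unpair.2 ≤ e := le_trans (Nat.unpair_right_le c) hc
        have hx1 : c.unpair.2.unpair.1 ≤ e := le_trans (Nat.unpair_left_le _) hx
        have hx2 : c.unpair.2.unpair.2 ≤ e := le_trans (Nat.unpair_right_le _) hx
        constructor
        · apply boolEq
          rw [htab1 c hc w, hdec, Bool.and_eq_true, htab1 _ hx1 w, htab1 _ hx2 w]
          exact Iff.rfl
        · apply boolEq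
          rw [htab0 c hc w, hdec, Bool.or_eq_true, htab0 _ hx1 w, htab0 _ hx2 w]
          exact Iff.rfl
      · rw [if_neg h2]
        by_cases h3 : c.unpair.1 = 3
        · rw [if_pos h3, Bool.and_eq_true, beq_iff_eq, beq_iff_eq]
          have hdec : decodeF c =
              .disj (decodeF c.unpair.2.unpair.1) (decodeF c.unpair.2.unpair.2) := by
            rw [decodeF, dif_neg h1, dif_neg h2, dif_pos h3]
          have hx : c.unpair.2 ≤ e := le_trans (Nat.unpair_right_le c) hc
          have hx1 : c.unpair.2.unpair.1 ≤ e := le_trans (Nat.unpair_left_le _) hx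
          have hx2 : c.unpair.2.unpair.2 ≤ e := le_trans (Nat.unpair_right_le _) hx
          constructor
          · apply boolEq
            rw [htab1 c hc w, hdec, Bool.or_eq_true, htab1 _ hx1 w, htab1 _ hx2 w]
            exact Iff.rfl
          · apply boolEq
            rw [htab0 c hc w, hdec, Bool.and_eq_true, htab0 _ hx1 w, htab0 _ hx2 w]
            exact Iff.rfl
        · rw [if_neg h3]
          by_cases h4 : c.unpair.1 = 4
          · rw [if_pos h4, Bool.and_eq_true, beq_iff_eq, beq_iff_eq]
            have hdec : decodeF c =
                .imp (decodeF c.unpair.2.unpair.1) (decodeF c.unpair.2.unpair.2) := by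
              rw [decodeF, dif_neg h1, dif_neg h2, dif_neg h3, dif_pos h4]
            have hx : c.unpair.2 ≤ e := le_trans (Nat.unpair_right_le c) hc
            have hx1 : c.unpair.2.unpair.1 ≤ e := le_trans (Nat.unpair_left_le _) hx
            have hx2 : c.unpair.2.unpair.2 ≤ e := le_trans (Nat.unpair_right_le _) hx
            constructor
            · apply boolEq
              rw [htab1 c hc w, hdec, bAll_eq_true]
              constructor
              · intro hs i hi
                apply impB3_intro
                intro hlw htb
                exact (htab1 _ hx2 ⟨i, hi⟩).mpr
                  (hs ⟨i, hi⟩ ((hle w ⟨i, hi⟩).mp hlw) ((htab1 _ hx1 ⟨i, hi⟩).mp htb))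
              · intro hs w' hlw hφ
                exact (htab1 _ hx2 w').mp (impB3_elim (hs w'.val w'.isLt)
                  ((hle w w').mpr hlw) ((htab1 _ hx1 w').mpr hφ))
            · apply boolEq
              rw [htab0 c hc w, hdec, Bool.and_eq_true, htab1 _ hx1 w, htab0 _ hx2 w]
              exact Iff.rfl
          · rw [if_neg h4]
            by_cases h5 : c.unpair.1 = 5
            · rw [if_pos h5, Bool.and_eq_true, beq_iff_eq, beq_iff_eq]
              have hdec : decodeF c = .box (decodeF c.unpair.2) := by
                rw [decodeF, dif_neg h1, dif_neg h2, dif_neg h3, dif_neg h4, dif_pos h5]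
              have hx : c.unpair.2 ≤ e := le_trans (Nat.unpair_right_le c) hc
              constructor
              · apply boolEq
                rw [htab1 c hc w, hdec, bAll_eq_true]
                constructor
                · intro hs r hr
                  have hi : r / k < k := (Nat.div_lt_iff_lt_mul hk0).mpr hr
                  have hj : r % k < k := Nat.mod_lt _ hk0
                  apply impB3_intro
                  intro hlw hrp
                  exact (htab1 _ hx ⟨r % k, hj⟩).mpr
                    (hs ⟨r / k, hi⟩ ((hle w ⟨r / k, hi⟩).mp hlw) ⟨r % k, hj⟩
                      ((hrpb ⟨r / k, hi⟩ ⟨r % k, hj⟩).mp hrp))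
                · intro hs w' hlw u hru
                  have hr : w'.val * k + u.val < k * k := by
                    calc w'.val * k + u.val < w'.val * k + k := by omega
                    _ = (w'.val + 1) * k := by ring
                    _ ≤ k * k := Nat.mul_le_mul_right k w'.isLt
                  have := hs _ hr
                  rw [(pair_decode u.isLt).1, (pair_decode u.isLt).2] at this
                  exact (htab1 _ hx u).mp (impB3_elim this ((hle w w').mpr hlw)
                    ((hrpb w' u).mpr hru))
              · apply boolEq
                rw [htab0 c hc w, hdec, bAll_eq_true]
                constructor
                · intro hs w' hw'
                  apply impB2_intro
                  intro hlw
                  obtain ⟨u, hru, hsu⟩ := hs ⟨w', hw'⟩ ((hle w ⟨w', hw'⟩).mp hlw)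
                  apply bAny_eq_true.mpr
                  refine ⟨u.val, u.isLt, ?_⟩
                  rw [Bool.and_eq_true]
                  exact ⟨(hrnb ⟨w', hw'⟩ u).mpr hru, (htab0 _ hx u).mpr hsu⟩
                · intro hs w' hlw
                  have := impB2_elim (hs w'.val w'.isLt) ((hle w w').mpr hlw)
                  obtain ⟨u, hu, hb⟩ := bAny_eq_true.mp this
                  rw [Bool.and_eq_true] at hb
                  exact ⟨⟨u, hu⟩, (hrnb w' ⟨u, hu⟩).mp hb.1, (htab0 _ hx ⟨u, hu⟩).mp hb.2⟩
            · rw [if_neg h5]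
              by_cases h6 : c.unpair.1 = 6
              · rw [if_pos h6, Bool.and_eq_true, beq_iff_eq, beq_iff_eq]
                have hdec : decodeF c = .dia (decodeF c.unpair.2) := by
                  rw [decodeF, dif_neg h1, dif_neg h2, dif_neg h3, dif_neg h4, dif_neg h5,
                    dif_pos h6]
                have hx : c.unpair.2 ≤ e := le_trans (Nat.unpair_right_le c) hc
                constructor
                · apply boolEq
                  rw [htab1 c hc w, hdec, bAll_eq_true]
                  constructor
                  · intro hs w' hw'
                    apply impB2_intro
                    intro hlw
                    obtain ⟨u, hru, hsu⟩ := hs ⟨w', hw'⟩ ((hle w ⟨w', hw'⟩).mp hlw)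
                    apply bAny_eq_true.mpr
                    refine ⟨u.val, u.isLt, ?_⟩
                    rw [Bool.and_eq_true]
                    exact ⟨(hrpd ⟨w', hw'⟩ u).mpr hru, (htab1 _ hx u).mpr hsu⟩
                  · intro hs w' hlw
                    have := impB2_elim (hs w'.val w'.isLt) ((hle w w').mpr hlw)
                    obtain ⟨u, hu, hb⟩ := bAny_eq_true.mp this
                    rw [Bool.and_eq_true] at hb
                    exact ⟨⟨u, hu⟩, (hrpd w' ⟨u, hu⟩).mp hb.1, (htab1 _ hx ⟨u, hu⟩).mp hb.2⟩
                · apply boolEq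
                  rw [htab0 c hc w, hdec, bAll_eq_true]
                  constructor
                  · intro hs r hr
                    have hi : r / k < k := (Nat.div_lt_iff_lt_mul hk0).mpr hr
                    have hj : r % k < k := Nat.mod_lt _ hk0
                    apply impB3_intro
                    intro hlw hrp
                    exact (htab0 _ hx ⟨r % k, hj⟩).mpr
                      (hs ⟨r / k, hi⟩ ((hle w ⟨r / k, hi⟩).mp hlw) ⟨r % k, hj⟩
                        ((hrnd ⟨r / k, hi⟩ ⟨r % k, hj⟩).mp hrp))
                  · intro hs w' hlw u hru
                    have hr : w'.val * k + u.val < k * k := by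
                      calc w'.val * k + u.val < w'.val * k + k := by omega
                      _ = (w'.val + 1) * k := by ring
                      _ ≤ k * k := Nat.mul_le_mul_right k w'.isLt
                    have := hs _ hr
                    rw [(pair_decode u.isLt).1, (pair_decode u.isLt).2] at this
                    exact (htab0 _ hx u).mp (impB3_elim this ((hle w w').mpr hlw)
                      ((hrnd w' u).mpr hru))
              · rw [if_neg h6, Bool.and_eq_true, beq_iff_eq, beq_iff_eq]
                have hdec : decodeF c = .pv c.unpair.2 := by
                  rw [decodeF, dif_neg h1, dif_neg h2, dif_neg h3, dif_neg h4, dif_neg h5,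
                    dif_neg h6]
                have hx : c.unpair.2 ≤ e := le_trans (Nat.unpair_right_le c) hc
                constructor
                · apply boolEq
                  rw [htab1 c hc w, hdec]
                  exact (hvp _ hx w).symm
                · apply boolEq
                  rw [htab0 c hc w, hdec]
                  exact (hvn _ hx w).symm
  have hrOK : refuted e k z = true := by
    rw [refuted]
    apply bAny_eq_true.mpr
    refine ⟨w0.val, w0.isLt, ?_⟩
    have : tabB e k z e 1 w0.val = false := by
      have hiff := htab1 e (le_refl e) w0
      rw [he, decodeF_encode] at hiff
      cases hres : tabB e k z e 1 w0.val
      · rfl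
      · exact absurd (hiff.mp hres) hw0
    rw [this]
    rfl
  rw [checkOne, hfOK, htOK, hrOK]
  rfl

/- ============ computability of the checker ============ -/

lemma bAll_rec (p : ℕ → Bool) : ∀ n, bAll n p = Nat.rec true (fun y IH => IH && p y) n
  | 0 => rfl
  | n + 1 => by rw [bAll, bAll_rec p n]

lemma bAny_rec (p : ℕ → Bool) : ∀ n, bAny n p = Nat.rec false (fun y IH => IH || p y) n
  | 0 => rfl
  | n + 1 => by rw [bAny, bAny_rec p n]

section PR

variable {α : Type} [Primcodable α]

lemma pr_pow : Primrec₂ ((· ^ ·) : ℕ → ℕ → ℕ) := Primrec₂.unpaired'.1 Nat.Primrec.pow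

lemma pr_bAll {f : α → ℕ} {p : α → ℕ → Bool} (hf : Primrec f) (hp : Primrec₂ p) :
    Primrec fun a => bAll (f a) (p a) := by
  have h := Primrec.nat_rec' (h := fun (a : α) (q : ℕ × Bool) => q.2 && p a q.1) hf
    (Primrec.const true)
    ((Primrec.and.comp (Primrec.snd.comp Primrec.snd)
      (hp.comp Primrec.fst (Primrec.fst.comp Primrec.snd))).to₂)
  exact h.of_eq fun a => (bAll_rec (p a) (f a)).symm

lemma pr_bAny {f : α → ℕ} {p : α → ℕ → Bool} (hf : Primrec f) (hp : Primrec₂ p) :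
    Primrec fun a => bAny (f a) (p a) := by
  have h := Primrec.nat_rec' (h := fun (a : α) (q : ℕ × Bool) => q.2 || p a q.1) hf
    (Primrec.const false)
    ((Primrec.or.comp (Primrec.snd.comp Primrec.snd)
      (hp.comp Primrec.fst (Primrec.fst.comp Primrec.snd))).to₂)
  exact h.of_eq fun a => (bAny_rec (p a) (f a)).symm

lemma pr_bitf {f g : α → ℕ} (hf : Primrec f) (hg : Primrec g) :
    Primrec fun a => bitf (f a) (g a) :=
  PrimrecPred.decide (Primrec.eq.comp
    (Primrec.nat_mod.comp
      (Primrec.nat_div.comp hf (pr_pow.comp (Primrec.const 2) hg))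
      (Primrec.const 2))
    (Primrec.const 1))

lemma pr_leB {k z i j : α → ℕ} (hk : Primrec k) (hz : Primrec z) (hi : Primrec i)
    (hj : Primrec j) : Primrec fun a => leB (k a) (z a) (i a) (j a) :=
  pr_bitf hz (Primrec.nat_add.comp (Primrec.nat_mul.comp hi hk) hj)

lemma pr_rpbB {k z i j : α → ℕ} (hk : Primrec k) (hz : Primrec z) (hi : Primrec i)
    (hj : Primrec j) : Primrec fun a => rpbB (k a) (z a) (i a) (j a) :=
  pr_bitf hz (Primrec.nat_add.comp (Primrec.nat_mul.comp hk hk)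
    (Primrec.nat_add.comp (Primrec.nat_mul.comp hi hk) hj))

lemma pr_rnbB {k z i j : α → ℕ} (hk : Primrec k) (hz : Primrec z) (hi : Primrec i)
    (hj : Primrec j) : Primrec fun a => rnbB (k a) (z a) (i a) (j a) :=
  pr_bitf hz (Primrec.nat_add.comp
    (Primrec.nat_mul.comp (Primrec.const 2) (Primrec.nat_mul.comp hk hk))
    (Primrec.nat_add.comp (Primrec.nat_mul.comp hi hk) hj))

lemma pr_rpdB {k z i j : α → ℕ} (hk : Primrec k) (hz : Primrec z) (hi : Primrec i)
    (hj : Primrec j) : Primrec fun a => rpdB (k a) (z a) (i a) (j a) :=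
  pr_bitf hz (Primrec.nat_add.comp
    (Primrec.nat_mul.comp (Primrec.const 3) (Primrec.nat_mul.comp hk hk))
    (Primrec.nat_add.comp (Primrec.nat_mul.comp hi hk) hj))

lemma pr_rndB {k z i j : α → ℕ} (hk : Primrec k) (hz : Primrec z) (hi : Primrec i)
    (hj : Primrec j) : Primrec fun a => rndB (k a) (z a) (i a) (j a) :=
  pr_bitf hz (Primrec.nat_add.comp
    (Primrec.nat_mul.comp (Primrec.const 4) (Primrec.nat_mul.comp hk hk))
    (Primrec.nat_add.comp (Primrec.nat_mul.comp hi hk) hj))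

lemma pr_vpB {e k z n i : α → ℕ} (he : Primrec e) (hk : Primrec k) (hz : Primrec z)
    (hn : Primrec n) (hi : Primrec i) : Primrec fun a => vpB (e a) (k a) (z a) (n a) (i a) :=
  pr_bitf hz (Primrec.nat_add.comp
    (Primrec.nat_mul.comp (Primrec.const 5) (Primrec.nat_mul.comp hk hk))
    (Primrec.nat_add.comp (Primrec.nat_mul.comp hn hk) hi))

lemma pr_vnB {e k z n i : α → ℕ} (he : Primrec e) (hk : Primrec k) (hz : Primrec z)
    (hn : Primrec n) (hi : Primrec i) : Primrec fun a => vnB (e a) (k a) (z a) (n a) (i a) :=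
  pr_bitf hz (Primrec.nat_add.comp
    (Primrec.nat_add.comp
      (Primrec.nat_mul.comp (Primrec.const 5) (Primrec.nat_mul.comp hk hk))
      (Primrec.nat_mul.comp (Primrec.nat_add.comp he (Primrec.const 1)) hk))
    (Primrec.nat_add.comp (Primrec.nat_mul.comp hn hk) hi))

lemma pr_tabB {e k z c b w : α → ℕ} (he : Primrec e) (hk : Primrec k) (hz : Primrec z)
    (hc : Primrec c) (hb : Primrec b) (hw : Primrec w) :
    Primrec fun a => tabB (e a) (k a) (z a) (c a) (b a) (w a) :=
  pr_bitf hz (Primrec.nat_add.comp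
    (Primrec.nat_add.comp
      (Primrec.nat_mul.comp (Primrec.const 5) (Primrec.nat_mul.comp hk hk))
      (Primrec.nat_mul.comp (Primrec.const 2)
        (Primrec.nat_mul.comp (Primrec.nat_add.comp he (Primrec.const 1)) hk)))
    (Primrec.nat_add.comp
      (Primrec.nat_mul.comp
        (Primrec.nat_add.comp (Primrec.nat_mul.comp (Primrec.const 2) hc) hb) hk) hw))

lemma pr_frameOK {e k z : α → ℕ} (he : Primrec e) (hk : Primrec k) (hz : Primrec z) :
    Primrec fun a => frameOK (e a) (k a) (z a) := by
  unfold frameOK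
  have hk' : Primrec fun y : α × ℕ => k y.1 := hk.comp Primrec.fst
  have hz' : Primrec fun y : α × ℕ => z y.1 := hz.comp Primrec.fst
  have he' : Primrec fun y : α × ℕ => e y.1 := he.comp Primrec.fst
  have hq : Primrec fun y : α × ℕ => y.2 := Primrec.snd
  have hkk : Primrec fun y : α × ℕ => k y.1 * k y.1 := Primrec.nat_mul.comp hk' hk'
  have hI : Primrec fun y : α × ℕ => y.2 / (k y.1 * k y.1) := Primrec.nat_div.comp hq hkk
  have hJ : Primrec fun y : α × ℕ => y.2 / k y.1 % k y.1 :=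
    Primrec.nat_mod.comp (Primrec.nat_div.comp hq hk') hk'
  have hL : Primrec fun y : α × ℕ => y.2 % k y.1 := Primrec.nat_mod.comp hq hk'
  apply Primrec.and.comp
  · apply Primrec.and.comp
    · exact pr_bAll hk (pr_leB hk' hz' hq hq).to₂
    · apply pr_bAll (Primrec.nat_mul.comp hk (Primrec.nat_mul.comp hk hk))
      exact (Primrec.or.comp
        (Primrec.not.comp (Primrec.and.comp
          (pr_leB hk' hz' hI hJ) (pr_leB hk' hz' hJ hL)))
        (pr_leB hk' hz' hI hL)).to₂
  · apply pr_bAll (Primrec.nat_mul.comp (Primrec.nat_add.comp he (Primrec.const 1))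
      (Primrec.nat_mul.comp hk hk))
    exact (Primrec.and.comp
      (Primrec.or.comp
        (Primrec.not.comp (Primrec.and.comp (pr_leB hk' hz' hJ hL)
          (pr_vpB he' hk' hz' hI hJ)))
        (pr_vpB he' hk' hz' hI hL))
      (Primrec.or.comp
        (Primrec.not.comp (Primrec.and.comp (pr_leB hk' hz' hJ hL)
          (pr_vnB he' hk' hz' hI hJ)))
        (pr_vnB he' hk' hz' hI hL))).to₂

lemma pr_tabCond {e k z c w : α → ℕ} (he : Primrec e) (hk : Primrec k) (hz : Primrec z)
    (hc : Primrec c) (hw : Primrec w) :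
    Primrec fun a => tabCond (e a) (k a) (z a) (c a) (w a) := by
  unfold tabCond
  have hup : Primrec fun a => (c a).unpair.1 := Primrec.fst.comp (Primrec.unpair.comp hc)
  have hx : Primrec fun a => (c a).unpair.2 := Primrec.snd.comp (Primrec.unpair.comp hc)
  have hx1 : Primrec fun a => (c a).unpair.2.unpair.1 :=
    Primrec.fst.comp (Primrec.unpair.comp hx)
  have hx2 : Primrec fun a => (c a).unpair.2.unpair.2 :=
    Primrec.snd.comp (Primrec.unpair.comp hx)
  -- lifted accessors to α × ℕ
  have he' : Primrec fun y : α × ℕ => e y.1 := he.comp Primrec.fst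
  have hk' : Primrec fun y : α × ℕ => k y.1 := hk.comp Primrec.fst
  have hz' : Primrec fun y : α × ℕ => z y.1 := hz.comp Primrec.fst
  have hw' : Primrec fun y : α × ℕ => w y.1 := hw.comp Primrec.fst
  have hx' : Primrec fun y : α × ℕ => (c y.1).unpair.2 := hx.comp Primrec.fst
  have hx1' : Primrec fun y : α × ℕ => (c y.1).unpair.2.unpair.1 := hx1.comp Primrec.fst
  have hx2' : Primrec fun y : α × ℕ => (c y.1).unpair.2.unpair.2 := hx2.comp Primrec.fst
  have hsnd : Primrec fun y : α × ℕ => y.2 := Primrec.snd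
  -- lifted accessors to (α × ℕ) × ℕ
  have he'' : Primrec fun y : (α × ℕ) × ℕ => e y.1.1 := he.comp (Primrec.fst.comp Primrec.fst)
  have hk'' : Primrec fun y : (α × ℕ) × ℕ => k y.1.1 := hk.comp (Primrec.fst.comp Primrec.fst)
  have hz'' : Primrec fun y : (α × ℕ) × ℕ => z y.1.1 := hz.comp (Primrec.fst.comp Primrec.fst)
  have hx'' : Primrec fun y : (α × ℕ) × ℕ => (c y.1.1).unpair.2 :=
    hx.comp (Primrec.fst.comp Primrec.fst)
  have hwp : Primrec fun y : (α × ℕ) × ℕ => y.1.2 := Primrec.snd.comp Primrec.fst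
  have hu : Primrec fun y : (α × ℕ) × ℕ => y.2 := Primrec.snd
  have hdivk : Primrec fun y : α × ℕ => y.2 / k y.1 := Primrec.nat_div.comp hsnd hk'
  have hmodk : Primrec fun y : α × ℕ => y.2 % k y.1 := Primrec.nat_mod.comp hsnd hk'
  have c0 : Primrec (fun a : α => (0 : ℕ)) := Primrec.const 0
  have c1 : Primrec (fun a : α => (1 : ℕ)) := Primrec.const 1
  have c0' : Primrec (fun y : α × ℕ => (0 : ℕ)) := Primrec.const 0
  have c1' : Primrec (fun y : α × ℕ => (1 : ℕ)) := Primrec.const 1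
  apply Primrec.ite (Primrec.eq.comp hup (Primrec.const 1))
  · exact Primrec.and.comp
      (Primrec.beq.comp (pr_tabB he hk hz hc c1 hw) (pr_tabB he hk hz hx c0 hw))
      (Primrec.beq.comp (pr_tabB he hk hz hc c0 hw) (pr_tabB he hk hz hx c1 hw))
  apply Primrec.ite (Primrec.eq.comp hup (Primrec.const 2))
  · exact Primrec.and.comp
      (Primrec.beq.comp (pr_tabB he hk hz hc c1 hw)
        (Primrec.and.comp (pr_tabB he hk hz hx1 c1 hw) (pr_tabB he hk hz hx2 c1 hw)))
      (Primrec.beq.comp (pr_tabB he hk hz hc c0 hw)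
        (Primrec.or.comp (pr_tabB he hk hz hx1 c0 hw) (pr_tabB he hk hz hx2 c0 hw)))
  apply Primrec.ite (Primrec.eq.comp hup (Primrec.const 3))
  · exact Primrec.and.comp
      (Primrec.beq.comp (pr_tabB he hk hz hc c1 hw)
        (Primrec.or.comp (pr_tabB he hk hz hx1 c1 hw) (pr_tabB he hk hz hx2 c1 hw)))
      (Primrec.beq.comp (pr_tabB he hk hz hc c0 hw)
        (Primrec.and.comp (pr_tabB he hk hz hx1 c0 hw) (pr_tabB he hk hz hx2 c0 hw)))
  apply Primrec.ite (Primrec.eq.comp hup (Primrec.const 4))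
  · exact Primrec.and.comp
      (Primrec.beq.comp (pr_tabB he hk hz hc c1 hw)
        (pr_bAll hk (Primrec.or.comp
          (Primrec.or.comp
            (Primrec.not.comp (pr_leB hk' hz' hw' hsnd))
            (Primrec.not.comp (pr_tabB he' hk' hz' hx1' c1' hsnd)))
          (pr_tabB he' hk' hz' hx2' c1' hsnd)).to₂))
      (Primrec.beq.comp (pr_tabB he hk hz hc c0 hw)
        (Primrec.and.comp (pr_tabB he hk hz hx1 c1 hw) (pr_tabB he hk hz hx2 c0 hw)))
  apply Primrec.ite (Primrec.eq.comp hup (Primrec.const 5))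
  · exact Primrec.and.comp
      (Primrec.beq.comp (pr_tabB he hk hz hc c1 hw)
        (pr_bAll (Primrec.nat_mul.comp hk hk) (Primrec.or.comp
          (Primrec.or.comp
            (Primrec.not.comp (pr_leB hk' hz' hw' hdivk))
            (Primrec.not.comp (pr_rpbB hk' hz' hdivk hmodk)))
          (pr_tabB he' hk' hz' hx' c1' hmodk)).to₂))
      (Primrec.beq.comp (pr_tabB he hk hz hc c0 hw)
        (pr_bAll hk (Primrec.or.comp
          (Primrec.not.comp (pr_leB hk' hz' hw' hsnd))
          (pr_bAny (hk.comp Primrec.fst) (Primrec.and.comp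
            (pr_rnbB hk'' hz'' hwp hu)
            (pr_tabB he'' hk'' hz'' hx'' (Primrec.const 0) hu)).to₂)).to₂))
  apply Primrec.ite (Primrec.eq.comp hup (Primrec.const 6))
  · exact Primrec.and.comp
      (Primrec.beq.comp (pr_tabB he hk hz hc c1 hw)
        (pr_bAll hk (Primrec.or.comp
          (Primrec.not.comp (pr_leB hk' hz' hw' hsnd))
          (pr_bAny (hk.comp Primrec.fst) (Primrec.and.comp
            (pr_rpdB hk'' hz'' hwp hu)
            (pr_tabB he'' hk'' hz'' hx'' (Primrec.const 1) hu)).to₂)).to₂))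
      (Primrec.beq.comp (pr_tabB he hk hz hc c0 hw)
        (pr_bAll (Primrec.nat_mul.comp hk hk) (Primrec.or.comp
          (Primrec.or.comp
            (Primrec.not.comp (pr_leB hk' hz' hw' hdivk))
            (Primrec.not.comp (pr_rndB hk' hz' hdivk hmodk)))
          (pr_tabB he' hk' hz' hx' c0' hmodk)).to₂))
  · exact Primrec.and.comp
      (Primrec.beq.comp (pr_tabB he hk hz hc c1 hw) (pr_vpB he hk hz hx hw))
      (Primrec.beq.comp (pr_tabB he hk hz hc c0 hw) (pr_vnB he hk hz hx hw))

lemma pr_tabOK {e k z : α → ℕ} (he : Primrec e) (hk : Primrec k) (hz : Primrec z) :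
    Primrec fun a => tabOK (e a) (k a) (z a) := by
  unfold tabOK
  apply pr_bAll (Primrec.nat_mul.comp (Primrec.nat_add.comp he (Primrec.const 1)) hk)
  exact (pr_tabCond (he.comp Primrec.fst) (hk.comp Primrec.fst) (hz.comp Primrec.fst)
    (Primrec.nat_div.comp Primrec.snd (hk.comp Primrec.fst))
    (Primrec.nat_mod.comp Primrec.snd (hk.comp Primrec.fst))).to₂

lemma pr_refuted {e k z : α → ℕ} (he : Primrec e) (hk : Primrec k) (hz : Primrec z) :
    Primrec fun a => refuted (e a) (k a) (z a) := by
  unfold refuted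
  apply pr_bAny hk
  exact (Primrec.not.comp (pr_tabB (he.comp Primrec.fst) (hk.comp Primrec.fst)
    (hz.comp Primrec.fst) (he.comp Primrec.fst) (Primrec.const 1) Primrec.snd)).to₂

lemma pr_checkOne {e k z : α → ℕ} (he : Primrec e) (hk : Primrec k) (hz : Primrec z) :
    Primrec fun a => checkOne (e a) (k a) (z a) := by
  unfold checkOne
  exact Primrec.and.comp (Primrec.and.comp (pr_frameOK he hk hz) (pr_tabOK he hk hz))
    (pr_refuted he hk hz)

lemma pr_zBound {e k : α → ℕ} (he : Primrec e) (hk : Primrec k) :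
    Primrec fun a => zBound (e a) (k a) := by
  unfold zBound
  have h1 : Primrec fun a => (e a + 1) * k a :=
    Primrec.nat_mul.comp (Primrec.nat_add.comp he (Primrec.const 1)) hk
  exact Primrec.nat_add.comp (Primrec.nat_add.comp
    (Primrec.nat_mul.comp (Primrec.const 5) (Primrec.nat_mul.comp hk hk))
    (Primrec.nat_mul.comp (Primrec.const 2) h1))
    (Primrec.nat_mul.comp (Primrec.const 2) h1)

end PR

lemma pr_fCN4K : Primrec fCN4K := by
  unfold fCN4K
  apply Primrec.not.comp
  apply pr_bAny
  · exact Primrec.nat_add.comp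
      (pr_pow.comp (Primrec.const 16) (Primrec.nat_add.comp Primrec.id (Primrec.const 1)))
      (Primrec.const 1)
  · exact (pr_bAny
      (pr_pow.comp (Primrec.const 2) (pr_zBound Primrec.fst Primrec.snd))
      ((pr_checkOne (Primrec.fst.comp Primrec.fst) (Primrec.snd.comp Primrec.fst)
        Primrec.snd).to₂)).to₂


/-- Decidability of CN4K validity: there is an algorithm (a computable function
on codes of formulas) which decides whether a formula is valid in all CN4K models. -/
theorem cn4k_validity_decidable :
    ∃ f : ℕ → Bool, Computable f ∧ ∀ φ : MFm, (CN4KValid φ ↔ f φ.encode = true) := by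
  refine ⟨fCN4K, pr_fCN4K.to_comp, ?_⟩
  intro φ
  constructor
  · intro hv
    rw [fCN4K]
    cases hb : bAny (16 ^ (φ.encode + 1) + 1)
        (fun k => bAny (2 ^ zBound φ.encode k) (fun z => checkOne φ.encode k z)) with
    | false => rfl
    | true =>
        exfalso
        obtain ⟨k, _, h2⟩ := bAny_eq_true.mp hb
        obtain ⟨z, _, h3⟩ := bAny_eq_true.mp h2
        exact dirA h3 (by rw [decodeF_encode]; exact hv)
  · intro hf
    by_contra hv
    obtain ⟨k, z, hk, hz, hco⟩ := dirB φ hv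
    rw [fCN4K] at hf
    have hb : bAny (16 ^ (φ.encode + 1) + 1)
        (fun k => bAny (2 ^ zBound φ.encode k) (fun z => checkOne φ.encode k z)) = true :=
      bAny_eq_true.mpr ⟨k, by omega, bAny_eq_true.mpr ⟨z, hz, hco⟩⟩
    rw [hb] at hf
    simp at hf
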